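/- arXiv:1907.08639 — 7 statements merged into one kernel-verified Lean document; each statement's English description precedes it below -/
import Mathlib

section
/- If G is a graph with no isolated vertices, uv is an edge of the complement of G with γ_tR(G+uv) < γ_tR(G), and f is a total Roman dominating function on G+uv of minimum weight, then the multiset {f(u), f(v)} is one of {2,2}, {2,1}, {2,0}, {1,1}. -/
/-- A total Roman dominating function: values in {0,1,2}, every vertex with value 0
has a neighbour with value 2, and vertices with positive value are not isolated in
the induced subgraph of positive-value vertices. -/
def TRDF {V : Type*} (G : SimpleGraph V) (f : V → ℕ) : Prop :=
  (∀ v, f v ≤ 2) ∧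
  (∀ v, f v = 0 → ∃ u, G.Adj v u ∧ f u = 2) ∧
  (∀ v, 0 < f v → ∃ u, G.Adj v u ∧ 0 < f u)

/-- The total Roman domination number. -/
noncomputable def trdn {V : Type*} [Fintype V] (G : SimpleGraph V) : ℕ :=
  sInf {w | ∃ f : V → ℕ, TRDF G f ∧ w = ∑ v, f v}

/-- The graph `G + uv`. -/
def addEdge {V : Type*} (G : SimpleGraph V) (u v : V) : SimpleGraph V :=
  G ⊔ SimpleGraph.fromEdgeSet {s(u, v)}

/-- `G` has no isolated vertices. -/
def NoIsolated {V : Type*} (G : SimpleGraph V) : Prop := ∀ v, ∃ u, G.Adj v u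

lemma trdf_of_unused {V : Type*} (G : SimpleGraph V) (u v : V) (f : V → ℕ)
    (hf : TRDF (addEdge G u v) f)
    (h1 : ¬(f u = 0 ∧ f v = 2)) (h2 : ¬(f v = 0 ∧ f u = 2))
    (h3 : ¬(0 < f u ∧ 0 < f v)) : TRDF G f := by
  obtain ⟨hb, h0, hp⟩ := hf
  refine ⟨hb, ?_, ?_⟩
  · intro x hx
    obtain ⟨w, hadj, hw⟩ := h0 x hx
    refine ⟨w, ?_, hw⟩
    simp only [addEdge, SimpleGraph.sup_adj, SimpleGraph.fromEdgeSet_adj,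
      Set.mem_singleton_iff, Sym2.eq_iff] at hadj
    rcases hadj with h | ⟨(⟨rfl, rfl⟩ | ⟨rfl, rfl⟩), hne⟩
    · exact h
    · exact absurd ⟨hx, hw⟩ h1
    · exact absurd ⟨hx, hw⟩ h2
  · intro x hx
    obtain ⟨w, hadj, hw⟩ := hp x hx
    refine ⟨w, ?_, hw⟩
    simp only [addEdge, SimpleGraph.sup_adj, SimpleGraph.fromEdgeSet_adj,
      Set.mem_singleton_iff, Sym2.eq_iff] at hadj
    rcases hadj with h | ⟨(⟨rfl, rfl⟩ | ⟨rfl, rfl⟩), hne⟩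
    · exact h
    · exact absurd ⟨hx, hw⟩ h3
    · exact absurd ⟨hw, hx⟩ h3

theorem stmt0 {V : Type*} [Fintype V] (G : SimpleGraph V)
    (hiso : NoIsolated G) (u v : V) (huv : Gᶜ.Adj u v)
    (hcrit : trdn (addEdge G u v) < trdn G)
    (f : V → ℕ) (hf : TRDF (addEdge G u v) f)
    (hw : ∑ x, f x = trdn (addEdge G u v)) :
    ({f u, f v} : Multiset ℕ) ∈
      ({ {2, 2}, {2, 1}, {2, 0}, {1, 1} } : Set (Multiset ℕ)) := by
  have key : ¬ TRDF G f := by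
    intro hGf
    have h1 : trdn G ≤ ∑ x, f x := Nat.sInf_le ⟨f, hGf, rfl⟩
    omega
  have hbu := hf.1 u
  have hbv := hf.1 v
  by_contra hbad
  apply key
  apply trdf_of_unused G u v f hf
  · rintro ⟨h1, h2⟩
    exact hbad (by simp only [h1, h2, Set.mem_insert_iff, Set.mem_singleton_iff]; decide)
  · rintro ⟨h1, h2⟩
    exact hbad (by simp only [h1, h2, Set.mem_insert_iff, Set.mem_singleton_iff]; decide)
  · rintro ⟨h1, h2⟩
    interval_cases h : f u <;> interval_cases h' : f v <;>
      first
        | omega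
        | exact hbad (by simp only [h, h', Set.mem_insert_iff, Set.mem_singleton_iff]; decide)
end

section
/- If G is a graph with no isolated vertices, u and v are nonadjacent vertices of G both of degree 1, and γ_tR(G+uv) < γ_tR(G), then there exists a minimum-weight total Roman dominating function f on G+uv with f(u) = f(v) = 1. -/
open Finset

lemma trdn_le {V : Type*} [Fintype V] {G : SimpleGraph V} {f : V → ℕ} (hf : TRDF G f) :
    trdn G ≤ ∑ x, f x := Nat.sInf_le ⟨f, hf, rfl⟩

lemma trdn_exists {V : Type*} [Fintype V] {G' : SimpleGraph V} (h : NoIsolated G') :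
    ∃ g : V → ℕ, TRDF G' g ∧ ∑ x, g x = trdn G' := by
  have hne : {w | ∃ f : V → ℕ, TRDF G' f ∧ w = ∑ v, f v}.Nonempty := by
    refine ⟨_, fun _ => 2, ⟨fun _ => le_refl 2, fun v hv => by simp at hv, fun v _ => ?_⟩, rfl⟩
    obtain ⟨u, hu⟩ := h v; exact ⟨u, hu, by norm_num⟩
  obtain ⟨g, hg, hw⟩ := Nat.sInf_mem hne
  exact ⟨g, hg, hw.symm⟩

lemma addEdge_adj {V : Type*} {G : SimpleGraph V} {u v : V} (hne : u ≠ v) :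
    ∀ x y, (addEdge G u v).Adj x y ↔ (G.Adj x y ∨ (x = u ∧ y = v) ∨ (x = v ∧ y = u)) := by
  intro x y
  simp only [addEdge, SimpleGraph.sup_adj, SimpleGraph.fromEdgeSet_adj, Set.mem_singleton_iff,
    Sym2.eq_iff]
  constructor
  · rintro (h | ⟨(⟨rfl, rfl⟩ | ⟨rfl, rfl⟩), _⟩) <;> tauto
  · rintro (h | ⟨rfl, rfl⟩ | ⟨rfl, rfl⟩) <;> [left; skip; skip] <;> first | exact h | (right; constructor; tauto; first | exact hne | exact hne.symm)

lemma fix_lemma {V : Type*} [Fintype V] {G G' : SimpleGraph V} {u v u' : V}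
    (hadj : ∀ x y, G'.Adj x y ↔ (G.Adj x y ∨ (x = u ∧ y = v) ∨ (x = v ∧ y = u)))
    (huv : ¬ G.Adj u v) (hne : u ≠ v)
    (hu' : ∀ x, G.Adj u x ↔ x = u')
    {g : V → ℕ} (hg : TRDF G' g)
    (hmin : ∀ f : V → ℕ, TRDF G' f → ∑ x, g x ≤ ∑ x, f x)
    (hgu : g u = 2) (hgv : 0 < g v) :
    ∃ f : V → ℕ, TRDF G' f ∧ ∑ x, f x = ∑ x, g x ∧ f u = 1 ∧
      ∀ x, x ≠ u → x ≠ u' → f x = g x := by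
  classical
  obtain ⟨hg1, hg2, hg3⟩ := hg
  have hAuu' : G.Adj u u' := (hu' u').mpr rfl
  have huu' : u' ≠ u := fun h => G.irrefl (h ▸ hAuu')
  have hu'v : u' ≠ v := fun h => huv (h ▸ hAuu')
  have hadjuu' : G'.Adj u u' := (hadj u u').mpr (Or.inl hAuu')
  -- adjacency of u in G'
  have hadju : ∀ x, G'.Adj u x → x = u' ∨ x = v := by
    intro x hx
    rcases (hadj u x).mp hx with h | ⟨_, rfl⟩ | ⟨h, _⟩
    · exact Or.inl ((hu' x).mp h)
    · exact Or.inr rfl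
    · exact absurd h hne
  -- minimality: g u' ≤ 1
  have hgu' : g u' ≤ 1 := by
    by_contra hbad
    have hbad2 : g u' = 2 := le_antisymm (hg1 u') (by omega)
    set h : V → ℕ := Function.update g u 1 with hh
    have hhu : h u = 1 := Function.update_self u 1 g
    have hhx : ∀ x, x ≠ u → h x = g x := fun x hx => Function.update_of_ne hx 1 g
    have hTRDF : TRDF G' h := by
      refine ⟨fun x => ?_, fun x hx => ?_, fun x hx => ?_⟩
      · by_cases hxu : x = u
        · rw [hxu, hhu]; omega
        · rw [hhx x hxu]; exact hg1 x
      · have hxu : x ≠ u := fun h' => by rw [h', hhu] at hx; omega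
        rw [hhx x hxu] at hx
        obtain ⟨y, hy, hy2⟩ := hg2 x hx
        have hyu : y ≠ u := by
          rintro rfl
          rcases hadju x hy.symm with rfl | rfl
          · rw [hbad2] at hx; omega
          · omega
        exact ⟨y, hy, by rw [hhx y hyu]; exact hy2⟩
      · by_cases hxu : x = u
        · subst hxu
          exact ⟨u', hadjuu', by rw [hhx u' huu', hbad2]; omega⟩
        · rw [hhx x hxu] at hx
          obtain ⟨y, hy, hy2⟩ := hg3 x hx
          by_cases hyu : y = u
          · exact ⟨y, hy, by rw [hyu, hhu]; omega⟩
          · exact ⟨y, hy, by rw [hhx y hyu]; exact hy2⟩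
    have hsum : ∑ x, h x < ∑ x, g x := by
      have h1 : ∑ x, h x = h u + ∑ x ∈ univ.erase u, h x :=
        (Finset.add_sum_erase univ h (mem_univ u)).symm
      have h2 : ∑ x, g x = g u + ∑ x ∈ univ.erase u, g x :=
        (Finset.add_sum_erase univ g (mem_univ u)).symm
      have h3 : ∑ x ∈ univ.erase u, h x = ∑ x ∈ univ.erase u, g x :=
        Finset.sum_congr rfl (fun x hx => hhx x (Finset.ne_of_mem_erase hx))
      omega
    exact absurd (hmin h hTRDF) (by omega)
  -- the new function
  set f : V → ℕ := Function.update (Function.update g u' (g u' + 1)) u 1 with hf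
  have hfu : f u = 1 := Function.update_self u 1 _
  have hfu' : f u' = g u' + 1 := by
    rw [hf, Function.update_of_ne huu', Function.update_self]
  have hfx : ∀ x, x ≠ u → x ≠ u' → f x = g x := by
    intro x h1 h2
    rw [hf, Function.update_of_ne h1, Function.update_of_ne h2]
  have hfv : f v = g v := hfx v hne.symm (fun h => hu'v h.symm)
  refine ⟨f, ⟨fun x => ?_, fun x hx => ?_, fun x hx => ?_⟩, ?_, hfu, hfx⟩
  · by_cases h1 : x = u
    · rw [h1, hfu]; omega
    by_cases h2 : x = u'
    · rw [h2, hfu']; omega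
    · rw [hfx x h1 h2]; exact hg1 x
  · -- zero vertices
    have h1 : x ≠ u := fun h => by rw [h, hfu] at hx; omega
    have h2 : x ≠ u' := fun h => by rw [h, hfu'] at hx; omega
    rw [hfx x h1 h2] at hx
    obtain ⟨y, hy, hy2⟩ := hg2 x hx
    have hyu : y ≠ u := by
      rintro rfl
      rcases hadju x hy.symm with rfl | rfl
      · exact h2 rfl
      · omega
    have hyu' : y ≠ u' := fun h => by rw [h] at hy2; omega
    exact ⟨y, hy, by rw [hfx y hyu hyu']; exact hy2⟩
  · -- positive vertices
    by_cases h1 : x = u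
    · exact ⟨u', by rw [h1]; exact hadjuu', by rw [hfu']; omega⟩
    by_cases h2 : x = u'
    · exact ⟨u, by rw [h2]; exact hadjuu'.symm, by rw [hfu]; omega⟩
    rw [hfx x h1 h2] at hx
    obtain ⟨y, hy, hy2⟩ := hg3 x hx
    by_cases hyu : y = u
    · exact ⟨y, hy, by rw [hyu, hfu]; omega⟩
    by_cases hyu' : y = u'
    · exact ⟨y, hy, by rw [hyu', hfu']; omega⟩
    · exact ⟨y, hy, by rw [hfx y hyu hyu']; exact hy2⟩
  · -- sum
    have e1 : ∑ x, f x = f u + ∑ x ∈ univ.erase u, f x :=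
      (Finset.add_sum_erase univ f (mem_univ u)).symm
    have e2 : ∑ x, g x = g u + ∑ x ∈ univ.erase u, g x :=
      (Finset.add_sum_erase univ g (mem_univ u)).symm
    have hu'mem : u' ∈ univ.erase u := Finset.mem_erase.mpr ⟨huu', mem_univ u'⟩
    have e3 : ∑ x ∈ univ.erase u, f x = f u' + ∑ x ∈ (univ.erase u).erase u', f x :=
      (Finset.add_sum_erase _ f hu'mem).symm
    have e4 : ∑ x ∈ univ.erase u, g x = g u' + ∑ x ∈ (univ.erase u).erase u', g x :=
      (Finset.add_sum_erase _ g hu'mem).symm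
    have e5 : ∑ x ∈ (univ.erase u).erase u', f x = ∑ x ∈ (univ.erase u).erase u', g x := by
      refine Finset.sum_congr rfl (fun x hx => ?_)
      have := Finset.mem_erase.mp hx
      exact hfx x (Finset.ne_of_mem_erase this.2) this.1
    omega

lemma caseA_lemma {V : Type*} [Fintype V] {G G' : SimpleGraph V} {u v v' : V}
    (hadj : ∀ x y, G'.Adj x y ↔ (G.Adj x y ∨ (x = u ∧ y = v) ∨ (x = v ∧ y = u)))
    (huv : ¬ G.Adj u v) (hne : u ≠ v)
    (hv' : ∀ x, G.Adj v x ↔ x = v')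
    {g : V → ℕ} (hg : TRDF G' g)
    (hgu : g u = 0) (hgv : g v = 2) :
    ∃ f : V → ℕ, TRDF G' f ∧ ∑ x, f x = ∑ x, g x ∧ f u = 1 ∧ f v = 1 := by
  classical
  obtain ⟨hg1, hg2, hg3⟩ := hg
  have hAvv' : G.Adj v v' := (hv' v').mpr rfl
  have hvv' : v' ≠ v := fun h => G.irrefl (h ▸ hAvv')
  have hv'u : v' ≠ u := fun h => huv (G.adj_symm (h ▸ hAvv'))
  have hadjuv : G'.Adj u v := (hadj u v).mpr (Or.inr (Or.inl ⟨rfl, rfl⟩))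
  have hadjv : ∀ x, G'.Adj v x → x = v' ∨ x = u := by
    intro x hx
    rcases (hadj v x).mp hx with h | ⟨h, _⟩ | ⟨_, rfl⟩
    · exact Or.inl ((hv' x).mp h)
    · exact absurd h hne.symm
    · exact Or.inr rfl
  -- derive g v' > 0
  have hgv' : 0 < g v' := by
    obtain ⟨y, hy, hy2⟩ := hg3 v (by omega)
    rcases hadjv y hy with rfl | rfl
    · exact hy2
    · omega
  set f : V → ℕ := Function.update (Function.update g u 1) v 1 with hf
  have hfv : f v = 1 := Function.update_self v 1 _
  have hfu : f u = 1 := by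
    rw [hf, Function.update_of_ne hne, Function.update_self]
  have hfx : ∀ x, x ≠ u → x ≠ v → f x = g x := by
    intro x h1 h2
    rw [hf, Function.update_of_ne h2, Function.update_of_ne h1]
  refine ⟨f, ⟨fun x => ?_, fun x hx => ?_, fun x hx => ?_⟩, ?_, hfu, hfv⟩
  · by_cases h1 : x = u
    · rw [h1, hfu]; omega
    by_cases h2 : x = v
    · rw [h2, hfv]; omega
    · rw [hfx x h1 h2]; exact hg1 x
  · have h1 : x ≠ u := fun h => by rw [h, hfu] at hx; omega
    have h2 : x ≠ v := fun h => by rw [h, hfv] at hx; omega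
    rw [hfx x h1 h2] at hx
    obtain ⟨y, hy, hy2⟩ := hg2 x hx
    have hyu : y ≠ u := fun h => by rw [h, hgu] at hy2; omega
    have hyv : y ≠ v := by
      rintro rfl
      rcases hadjv x hy.symm with rfl | rfl
      · omega
      · exact h1 rfl
    exact ⟨y, hy, by rw [hfx y hyu hyv]; exact hy2⟩
  · by_cases h1 : x = u
    · exact ⟨v, by rw [h1]; exact hadjuv, by rw [hfv]; omega⟩
    by_cases h2 : x = v
    · exact ⟨u, by rw [h2]; exact hadjuv.symm, by rw [hfu]; omega⟩
    rw [hfx x h1 h2] at hx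
    obtain ⟨y, hy, hy2⟩ := hg3 x hx
    by_cases hyu : y = u
    · exact ⟨y, hy, by rw [hyu, hfu]; omega⟩
    by_cases hyv : y = v
    · exact ⟨y, hy, by rw [hyv, hfv]; omega⟩
    · exact ⟨y, hy, by rw [hfx y hyu hyv]; exact hy2⟩
  · have e1 : ∑ x, f x = f u + ∑ x ∈ univ.erase u, f x :=
      (Finset.add_sum_erase univ f (mem_univ u)).symm
    have e2 : ∑ x, g x = g u + ∑ x ∈ univ.erase u, g x :=
      (Finset.add_sum_erase univ g (mem_univ u)).symm
    have hvmem : v ∈ univ.erase u := Finset.mem_erase.mpr ⟨hne.symm, mem_univ v⟩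
    have e3 : ∑ x ∈ univ.erase u, f x = f v + ∑ x ∈ (univ.erase u).erase v, f x :=
      (Finset.add_sum_erase _ f hvmem).symm
    have e4 : ∑ x ∈ univ.erase u, g x = g v + ∑ x ∈ (univ.erase u).erase v, g x :=
      (Finset.add_sum_erase _ g hvmem).symm
    have e5 : ∑ x ∈ (univ.erase u).erase v, f x = ∑ x ∈ (univ.erase u).erase v, g x := by
      refine Finset.sum_congr rfl (fun x hx => ?_)
      have := Finset.mem_erase.mp hx
      exact hfx x (Finset.ne_of_mem_erase this.2) this.1
    omega

theorem stmt1 {V : Type*} [Fintype V] (G : SimpleGraph V) [DecidableRel G.Adj]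
    (hiso : NoIsolated G) (u v : V) (huv : Gᶜ.Adj u v)
    (hdu : G.degree u = 1) (hdv : G.degree v = 1)
    (hcrit : trdn (addEdge G u v) < trdn G) :
    ∃ f : V → ℕ, TRDF (addEdge G u v) f ∧ (∑ x, f x) = trdn (addEdge G u v) ∧
      f u = 1 ∧ f v = 1 := by
  classical
  obtain ⟨hne, hnadj⟩ := (SimpleGraph.compl_adj G u v).mp huv
  set G' := addEdge G u v with hG'
  have hadj := addEdge_adj (G := G) hne
  have hadj' : ∀ x y, G'.Adj x y ↔ (G.Adj x y ∨ (x = v ∧ y = u) ∨ (x = u ∧ y = v)) := by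
    intro x y; rw [hadj x y]; tauto
  -- unique neighbours
  obtain ⟨u', hu'eq⟩ := Finset.card_eq_one.mp hdu
  obtain ⟨v', hv'eq⟩ := Finset.card_eq_one.mp hdv
  have hu'char : ∀ x, G.Adj u x ↔ x = u' := fun x => by
    rw [← SimpleGraph.mem_neighborFinset, hu'eq, Finset.mem_singleton]
  have hv'char : ∀ x, G.Adj v x ↔ x = v' := fun x => by
    rw [← SimpleGraph.mem_neighborFinset, hv'eq, Finset.mem_singleton]
  have hu'v : u' ≠ v := fun h => hnadj (h ▸ (hu'char u').mpr rfl)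
  have hv'u : v' ≠ u := fun h => hnadj (G.adj_symm (h ▸ (hv'char v').mpr rfl))
  -- minimum TRDF on G'
  have hisoG' : NoIsolated G' := by
    intro x
    obtain ⟨y, hy⟩ := hiso x
    exact ⟨y, (hadj x y).mpr (Or.inl hy)⟩
  obtain ⟨g, hg, hsum⟩ := trdn_exists hisoG'
  have hmin : ∀ f : V → ℕ, TRDF G' f → ∑ x, g x ≤ ∑ x, f x := fun f hf =>
    hsum ▸ trdn_le hf
  have hnotG : ¬ TRDF G g := fun h => absurd (trdn_le h) (by omega)
  by_cases h2 : ∀ x, g x = 0 → ∃ y, G.Adj x y ∧ g y = 2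
  · -- failure is in the total condition: g u > 0 and g v > 0
    have h3 : ¬ ∀ x, 0 < g x → ∃ y, G.Adj x y ∧ 0 < g y := fun h3 =>
      hnotG ⟨hg.1, h2, h3⟩
    push_neg at h3
    obtain ⟨x, hx, hxall⟩ := h3
    obtain ⟨y, hy, hy2⟩ := hg.2.2 x hx
    have hB : 0 < g u ∧ 0 < g v := by
      rcases (hadj x y).mp hy with h | ⟨rfl, rfl⟩ | ⟨rfl, rfl⟩
      · exact absurd hy2 (by have := hxall y h; omega)
      · exact ⟨hx, hy2⟩
      · exact ⟨hy2, hx⟩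
    obtain ⟨hBu, hBv⟩ := hB
    -- step 1: arrange g₂ u = 1
    obtain ⟨g₂, hg₂, hsum₂, hg₂u, hg₂v⟩ :
        ∃ g₂ : V → ℕ, TRDF G' g₂ ∧ ∑ x, g₂ x = ∑ x, g x ∧ g₂ u = 1 ∧ g₂ v = g v := by
      by_cases hgu2 : g u = 2
      · obtain ⟨f, hf, hfs, hfu, hfx⟩ := fix_lemma hadj hnadj hne hu'char hg hmin hgu2 hBv
        exact ⟨f, hf, hfs, hfu, hfx v hne.symm hu'v.symm⟩
      · have : g u = 1 := by have := hg.1 u; omega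
        exact ⟨g, hg, rfl, this, rfl⟩
    have hmin₂ : ∀ f : V → ℕ, TRDF G' f → ∑ x, g₂ x ≤ ∑ x, f x := fun f hf => by
      rw [hsum₂]; exact hmin f hf
    -- step 2: arrange value 1 at v as well
    by_cases hgv2 : g₂ v = 2
    · obtain ⟨f, hf, hfs, hfv, hfx⟩ := fix_lemma hadj' (fun h => hnadj (G.adj_symm h))
        hne.symm hv'char hg₂ hmin₂ hgv2 (by omega)
      refine ⟨f, hf, by rw [hfs, hsum₂, hsum], ?_, hfv⟩
      rw [hfx u hne hv'u.symm, hg₂u]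
    · have : g₂ v = 1 := by have := hg₂.1 v; rw [hg₂v] at *; omega
      exact ⟨g₂, hg₂, by rw [hsum₂, hsum], hg₂u, this⟩
  · -- failure in the Roman condition: one endpoint is 0, the other 2
    push_neg at h2
    obtain ⟨x, hx, hxall⟩ := h2
    obtain ⟨y, hy, hy2⟩ := hg.2.1 x hx
    rcases (hadj x y).mp hy with h | ⟨rfl, rfl⟩ | ⟨rfl, rfl⟩
    · exact absurd hy2 (hxall y h)
    · obtain ⟨f, hf, hfs, hfu, hfv⟩ := caseA_lemma hadj hnadj hne hv'char hg hx hy2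
      exact ⟨f, hf, by rw [hfs, hsum], hfu, hfv⟩
    · obtain ⟨f, hf, hfs, hfv, hfu⟩ := caseA_lemma hadj' (fun h => hnadj (G.adj_symm h))
        hne.symm hu'char hg hx hy2
      exact ⟨f, hf, by rw [hfs, hsum], hfu, hfv⟩
end

section
/- For a graph G of order n ≥ 3 with no isolated vertices, γ_tR(G) = 3 if and only if G has a universal vertex (a vertex adjacent to all other vertices). -/
open Finset in
lemma sum_two_le {V : Type*} [Fintype V] [DecidableEq V] (f : V → ℕ) {a b : V}
    (hab : a ≠ b) : f a + f b ≤ ∑ v, f v := by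
  calc f a + f b = ∑ x ∈ ({a, b} : Finset V), f x := (Finset.sum_pair hab).symm
    _ ≤ ∑ v, f v := Finset.sum_le_sum_of_subset (Finset.subset_univ _)

open Finset in
lemma sum_three_le {V : Type*} [Fintype V] [DecidableEq V] (f : V → ℕ) {a b c : V}
    (hab : a ≠ b) (hac : a ≠ c) (hbc : b ≠ c) : f a + f b + f c ≤ ∑ v, f v := by
  have : f a + f b + f c = ∑ x ∈ ({a, b, c} : Finset V), f x := by
    rw [Finset.sum_insert (by simp [hab, hac]), Finset.sum_pair hbc, add_assoc]
  rw [this]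
  exact Finset.sum_le_sum_of_subset (Finset.subset_univ _)

lemma exists_not_mem_pair {V : Type*} [Fintype V] (hn : 3 ≤ Fintype.card V) (a b : V) :
    ∃ c, c ≠ a ∧ c ≠ b := by
  classical
  have h2 : ({a, b} : Finset V).card ≤ 2 := (Finset.card_insert_le _ _).trans (by simp)
  have hne : ({a, b} : Finset V) ≠ Finset.univ := by
    intro h
    rw [h, Finset.card_univ] at h2
    omega
  obtain ⟨c, _, hc⟩ := Finset.exists_of_ssubset (Finset.ssubset_univ_iff.mpr hne)
  simp at hc
  exact ⟨c, hc.1, hc.2⟩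

lemma trdf_ge_three {V : Type*} [Fintype V] (G : SimpleGraph V)
    (hn : 3 ≤ Fintype.card V) (f : V → ℕ) (hf : TRDF G f) : 3 ≤ ∑ v, f v := by
  classical
  by_contra h
  push_neg at h
  have hpos : ∃ v, 0 < f v := by
    by_contra hno
    push_neg at hno
    have : Nonempty V := Fintype.card_pos_iff.mp (by omega)
    obtain ⟨v⟩ := this
    obtain ⟨u, _, hu2⟩ := hf.2.1 v (by have := hno v; omega)
    have := hno u; omega
  obtain ⟨v, hv⟩ := hpos
  obtain ⟨u, hadj, hu⟩ := hf.2.2 v hv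
  have hne : v ≠ u := G.ne_of_adj hadj
  have h2 := sum_two_le f hne
  obtain ⟨w, hwv, hwu⟩ := exists_not_mem_pair hn v u
  have h3 := sum_three_le f hne hwv.symm hwu.symm
  have hw0 : f w = 0 := by omega
  obtain ⟨x, hxadj, hx2⟩ := hf.2.1 w hw0
  have hxv : x ≠ v := by intro e; subst e; omega
  have hxu : x ≠ u := by intro e; subst e; omega
  have := sum_three_le f hne (hxv.symm) (hxu.symm)
  omega

theorem stmt3 {V : Type*} [Fintype V] (G : SimpleGraph V)
    (hn : 3 ≤ Fintype.card V) (hiso : NoIsolated G) :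
    trdn G = 3 ↔ ∃ v : V, ∀ w, w ≠ v → G.Adj v w := by
  classical
  constructor
  · intro h
    have hSne : {w | ∃ f : V → ℕ, TRDF G f ∧ w = ∑ v, f v}.Nonempty := by
      by_contra hc
      rw [Set.not_nonempty_iff_eq_empty] at hc
      rw [trdn, hc, Nat.sInf_empty] at h
      omega
    have hmem := Nat.sInf_mem hSne
    rw [show sInf {w | ∃ f : V → ℕ, TRDF G f ∧ w = ∑ v, f v} = trdn G from rfl, h] at hmem
    obtain ⟨f, hf, hsum⟩ := hmem
    by_cases hv2 : ∃ v, f v = 2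
    · obtain ⟨v, hv⟩ := hv2
      obtain ⟨u, hadj, hu⟩ := hf.2.2 v (by omega)
      have hvu : v ≠ u := G.ne_of_adj hadj
      have h2 := sum_two_le f hvu
      refine ⟨v, fun w hw => ?_⟩
      by_cases hwu : w = u
      · subst hwu; exact hadj
      · have h3 := sum_three_le f hvu hw.symm (Ne.symm hwu)
        have hw0 : f w = 0 := by omega
        obtain ⟨x, hxadj, hx2⟩ := hf.2.1 w hw0
        have hxu : x ≠ u := by intro e; subst e; omega
        have hxw : x ≠ w := by intro e; subst e; omega
        have hxv : x = v := by
          by_contra hxv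
          have := sum_three_le f hvu (Ne.symm hxv) hxu.symm
          omega
        subst hxv
        exact hxadj.symm
    · push_neg at hv2
      have h1 : ∀ v, f v = 1 := by
        intro v
        have := hf.1 v
        have hv2' := hv2 v
        rcases Nat.lt_or_ge 0 (f v) with hp | hz
        · omega
        · exfalso
          obtain ⟨u, _, hu2⟩ := hf.2.1 v (by omega)
          exact hv2 u hu2
      have hcard : Fintype.card V = 3 := by
        have : ∑ v, f v = Fintype.card V := by
          rw [← Finset.card_univ, Finset.card_eq_sum_ones]
          exact Finset.sum_congr rfl fun v _ => h1 v
        omega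
      have : Nonempty V := Fintype.card_pos_iff.mp (by omega)
      obtain ⟨a⟩ := this
      obtain ⟨b, hab, _⟩ := hf.2.2 a (by rw [h1]; omega)
      have haneb : a ≠ b := G.ne_of_adj hab
      obtain ⟨c, hca, hcb⟩ := exists_not_mem_pair hn a b
      have huniv : ({a, b, c} : Finset V) = Finset.univ := by
        apply Finset.eq_univ_of_card
        rw [hcard, Finset.card_insert_of_notMem (by simp [haneb, Ne.symm hca]),
          Finset.card_pair (Ne.symm hcb)]
      have hmemabc : ∀ w : V, w = a ∨ w = b ∨ w = c := by
        intro w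
        have : w ∈ ({a, b, c} : Finset V) := huniv ▸ Finset.mem_univ w
        simpa using this
      obtain ⟨x, hcx, _⟩ := hf.2.2 c (by rw [h1]; omega)
      have hxc : x ≠ c := (G.ne_of_adj hcx).symm
      rcases hmemabc x with hx | hx | hx
      · subst hx
        refine ⟨x, fun w hw => ?_⟩
        rcases hmemabc w with h | h | h
        · exact absurd h hw
        · subst h; exact hab
        · subst h; exact hcx.symm
      · subst hx
        refine ⟨x, fun w hw => ?_⟩
        rcases hmemabc w with h | h | h
        · subst h; exact hab.symm
        · exact absurd h hw
        · subst h; exact hcx.symm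
      · exact absurd hx hxc
  · rintro ⟨v, hv⟩
    obtain ⟨u, hu, _⟩ := exists_not_mem_pair hn v v
    have hadj : G.Adj v u := hv u hu
    set f : V → ℕ := fun w => if w = v then 2 else if w = u then 1 else 0 with hfdef
    have hfv : f v = 2 := by simp [hfdef]
    have hfu : f u = 1 := by simp [hfdef, hu]
    have hTRDF : TRDF G f := by
      refine ⟨fun w => ?_, fun w hw => ?_, fun w hw => ?_⟩
      · simp only [hfdef]; split <;> [omega; skip]; split <;> omega
      · have hwv : w ≠ v := by intro e; subst e; omega
        exact ⟨v, (hv w hwv).symm, hfv⟩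
      · by_cases hwv : w = v
        · subst hwv; exact ⟨u, hadj, by omega⟩
        · have hwu : w = u := by
            by_contra hwu
            simp [hfdef, hwv, hwu] at hw
          subst hwu
          exact ⟨v, hadj.symm, by omega⟩
    have hsum : ∑ w, f w = 3 := by
      have : ∀ w : V, f w = (if w = v then 2 else 0) + (if w = u then 1 else 0) := by
        intro w
        by_cases h1 : w = v
        · subst h1; simp [hfdef, Ne.symm hu]
        · by_cases h2 : w = u <;> simp [hfdef, h1, h2, hu]
      rw [Finset.sum_congr rfl fun w _ => this w, Finset.sum_add_distrib,
        Finset.sum_ite_eq' Finset.univ v (fun _ => 2),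
        Finset.sum_ite_eq' Finset.univ u (fun _ => 1)]
      simp
    have h3mem : 3 ∈ {w | ∃ f : V → ℕ, TRDF G f ∧ w = ∑ v, f v} :=
      ⟨f, hTRDF, hsum.symm⟩
    refine le_antisymm (Nat.sInf_le h3mem) ?_
    exact le_csInf ⟨3, h3mem⟩ fun w ⟨g, hg, hw⟩ => hw ▸ trdf_ge_three G hn g hg
end

section
/- A graph G with no isolated vertices satisfies γ_tR(G) = 4 and γ_tR(G+e) = 3 for every edge e of the complement of G (with the complement having at least one edge) if and only if the complement of G is a galaxy, i.e., the disjoint union of two or more stars each with at least two vertices. -/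
/-- A galaxy: every component is a star with at least two vertices (each vertex has a
"center"; edges go exactly between a vertex and its center; no isolated vertices),
and there are at least two stars. -/
def IsGalaxy {V : Type*} (H : SimpleGraph V) : Prop :=
  ∃ center : V → V,
    (∀ v, center (center v) = center v) ∧
    (∀ v w, H.Adj v w ↔ (v ≠ w ∧ (v = center w ∨ w = center v))) ∧
    (∀ v, ∃ w, H.Adj v w) ∧
    (∃ v w, center v ≠ center w)

/-! ### Auxiliary machinery -/

section Aux
variable {V : Type*} [Fintype V]

noncomputable def pick (v w : V) : V :=
  if (Fintype.equivFin V v : ℕ) ≤ (Fintype.equivFin V w : ℕ) then v else w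

lemma pick_mem (v w : V) : pick v w = v ∨ pick v w = w := by
  unfold pick; split <;> simp

lemma pick_comm {v w : V} (h : v ≠ w) : pick v w = pick w v := by
  unfold pick
  rcases le_or_gt ((Fintype.equivFin V v : ℕ)) ((Fintype.equivFin V w : ℕ)) with h1 | h1
  · rcases lt_or_eq_of_le h1 with h2 | h2
    · rw [if_pos h1, if_neg (not_le.2 h2)]
    · exact absurd ((Fintype.equivFin V).injective (Fin.val_injective h2)) h
  · rw [if_neg (not_le.2 h1), if_pos h1.le]

open Classical in
noncomputable def galCenter (H : SimpleGraph V) (v : V) : V :=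
  if h : ∃ w, H.Adj v w ∧ ∀ x, H.Adj v x → x = w then
    (if ∃ x, H.Adj h.choose x ∧ x ≠ v then h.choose else pick v h.choose)
  else v

lemma galCenter_of_notleaf {H : SimpleGraph V} {v : V}
    (h : ¬ ∃ w, H.Adj v w ∧ ∀ x, H.Adj v x → x = w) : galCenter H v = v :=
  dif_neg h

open Classical in
lemma galCenter_leaf {H : SimpleGraph V} {v w : V} (hvw : H.Adj v w)
    (huniq : ∀ x, H.Adj v x → x = w) :
    galCenter H v = if ∃ x, H.Adj w x ∧ x ≠ v then w else pick v w := by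
  have h : ∃ w, H.Adj v w ∧ ∀ x, H.Adj v x → x = w := ⟨w, hvw, huniq⟩
  have hc : h.choose = w := huniq _ h.choose_spec.1
  unfold galCenter
  rw [dif_pos h, hc]

lemma galaxy_of_structure {H : SimpleGraph V}
    (hnb : ∀ v, ∃ w, H.Adj v w)
    (hedge : ∀ u v, H.Adj u v → (∀ x, H.Adj u x → x = v) ∨ (∀ x, H.Adj v x → x = u)) :
    (∀ v, galCenter H (galCenter H v) = galCenter H v) ∧
    (∀ v w, H.Adj v w ↔ (v ≠ w ∧ (v = galCenter H w ∨ w = galCenter H v))) := by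
  classical
  have C1 : ∀ v w, H.Adj v w → (∀ x, H.Adj v x → x = w) → (∃ x, H.Adj w x ∧ x ≠ v) →
      galCenter H v = w ∧ galCenter H w = w := by
    intro v w hvw huniq hbig
    constructor
    · rw [galCenter_leaf hvw huniq, if_pos hbig]
    · apply galCenter_of_notleaf
      rintro ⟨z, hwz, huz⟩
      obtain ⟨x, hwx, hxv⟩ := hbig
      have hx : x = z := huz _ hwx
      have hv : v = z := huz _ hvw.symm
      exact hxv (hx.trans hv.symm)
  have C2 : ∀ v w, H.Adj v w → (∀ x, H.Adj v x → x = w) → (¬ ∃ x, H.Adj w x ∧ x ≠ v) →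
      galCenter H v = pick v w ∧ galCenter H w = pick v w := by
    intro v w hvw huniq hk2
    push_neg at hk2
    constructor
    · rw [galCenter_leaf hvw huniq, if_neg]
      push_neg
      exact fun x hwx => hk2 x hwx
    · rw [galCenter_leaf hvw.symm hk2, if_neg, pick_comm hvw.symm.ne]
      push_neg
      exact fun x hvx => huniq x hvx
  have C3 : ∀ v w, (¬ ∃ z, H.Adj v z ∧ ∀ x, H.Adj v x → x = z) → H.Adj v w →
      galCenter H v = v ∧ galCenter H w = v := by
    intro v w hnl hvw
    have huniq : ∀ x, H.Adj w x → x = v := by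
      rcases hedge v w hvw with h | h
      · exact absurd ⟨w, hvw, h⟩ hnl
      · exact h
    have hbig : ∃ x, H.Adj v x ∧ x ≠ w := by
      by_contra hb
      push_neg at hb
      exact hnl ⟨w, hvw, fun x hx => by_contra fun hne => (hne (hb x hx)).elim⟩
    have := C1 w v hvw.symm huniq hbig
    exact ⟨this.2, this.1⟩
  constructor
  · intro v
    by_cases hL : ∃ w, H.Adj v w ∧ ∀ x, H.Adj v x → x = w
    · obtain ⟨w, hvw, huniq⟩ := hL
      by_cases hb : ∃ x, H.Adj w x ∧ x ≠ v
      · obtain ⟨h1, h2⟩ := C1 v w hvw huniq hb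
        rw [h1, h2]
      · obtain ⟨h1, h2⟩ := C2 v w hvw huniq hb
        rw [h1]
        rcases pick_mem v w with hp | hp
        · rw [hp, h1]; exact hp
        · rw [hp, h2]; exact hp
    · obtain ⟨w, hvw⟩ := hnb v
      obtain ⟨h1, _⟩ := C3 v w hL hvw
      rw [h1, h1]
  · have C4 : ∀ a b, a ≠ b → a = galCenter H b → H.Adj a b := by
      intro a b hne hab
      by_cases hL : ∃ w, H.Adj b w ∧ ∀ x, H.Adj b x → x = w
      · obtain ⟨w, hbw, huniq⟩ := hL
        by_cases hb : ∃ x, H.Adj w x ∧ x ≠ b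
        · rw [(C1 b w hbw huniq hb).1] at hab
          rw [hab]; exact hbw.symm
        · rw [(C2 b w hbw huniq hb).1] at hab
          rcases pick_mem b w with hp | hp
          · exact absurd (hab.trans hp) hne
          · rw [hab.trans hp]; exact hbw.symm
      · rw [galCenter_of_notleaf hL] at hab
        exact absurd hab hne
    intro v w
    constructor
    · intro hvw
      refine ⟨hvw.ne, ?_⟩
      by_cases hL : ∃ z, H.Adj v z ∧ ∀ x, H.Adj v x → x = z
      · obtain ⟨w', hvw', huniq⟩ := hL
        have hww' : w = w' := huniq _ hvw
        subst hww'
        by_cases hb : ∃ x, H.Adj w x ∧ x ≠ v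
        · exact Or.inr (C1 v w hvw huniq hb).1.symm
        · obtain ⟨h1, h2⟩ := C2 v w hvw huniq hb
          rcases pick_mem v w with hp | hp
          · exact Or.inl (by rw [h2, hp])
          · exact Or.inr (by rw [h1, hp])
      · exact Or.inl (C3 v w hL hvw).2.symm
    · rintro ⟨hne, h | h⟩
      · exact C4 v w hne h
      · exact (C4 w v hne.symm h).symm

end Aux

section Weights
open Classical
variable {V : Type*} [Fintype V] {K : SimpleGraph V} {f : V → ℕ}

lemma pair_le_sum {a b : V} (hab : a ≠ b) : f a + f b ≤ ∑ v, f v := by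
  rw [← Finset.sum_pair hab]
  exact Finset.sum_le_sum_of_subset (Finset.subset_univ _)

lemma triple_le_sum {a b c : V} (hab : a ≠ b) (hac : a ≠ c) (hbc : b ≠ c) :
    f a + f b + f c ≤ ∑ v, f v := by
  have h1 : ({a, b, c} : Finset V).sum f = f a + (f b + f c) := by
    rw [Finset.sum_insert (by simp [hab, hac]), Finset.sum_pair hbc]
  calc f a + f b + f c = ({a, b, c} : Finset V).sum f := by rw [h1]; ring
    _ ≤ _ := Finset.sum_le_sum_of_subset (Finset.subset_univ _)

lemma exists_two (hf : TRDF K f) (hcard : 4 ≤ Fintype.card V) (hs : ∑ v, f v ≤ 3) :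
    ∃ a, f a = 2 := by
  by_contra h2
  push_neg at h2
  have hge : ∀ v, 1 ≤ f v := by
    intro v
    rcases Nat.eq_zero_or_pos (f v) with h | h
    · obtain ⟨u, _, hu⟩ := hf.2.1 v h
      exact absurd hu (h2 u)
    · exact h
  have : Fintype.card V • 1 ≤ ∑ v, f v := by
    rw [← Finset.card_univ]
    exact Finset.card_nsmul_le_sum _ _ _ (fun x _ => hge x)
  simp at this
  omega

lemma weight_le2_false (hf : TRDF K f) (hcard : 4 ≤ Fintype.card V)
    (hs : ∑ v, f v ≤ 2) : False := by
  obtain ⟨a, ha⟩ := exists_two hf hcard (by omega)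
  obtain ⟨b, hab, hb⟩ := hf.2.2 a (by omega)
  have := pair_le_sum (f := f) hab.ne
  omega

lemma weight3_universal (hf : TRDF K f) (hcard : 4 ≤ Fintype.card V)
    (hs : ∑ v, f v ≤ 3) : ∃ a, ∀ x, x ≠ a → K.Adj a x := by
  obtain ⟨a, ha⟩ := exists_two hf hcard hs
  obtain ⟨b, hab, hb⟩ := hf.2.2 a (by omega)
  have hpair := pair_le_sum (f := f) hab.ne
  have hzero : ∀ x, x ≠ a → x ≠ b → f x = 0 := by
    intro x hxa hxb
    have := triple_le_sum (f := f) hab.ne hxa.symm hxb.symm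
    omega
  refine ⟨a, fun x hxa => ?_⟩
  by_cases hxb : x = b
  · rw [hxb]; exact hab
  · obtain ⟨u, hxu, hu⟩ := hf.2.1 x (hzero x hxa hxb)
    have hua : u = a := by
      by_contra hua
      by_cases hub : u = b
      · rw [hub] at hu; omega
      · have := hzero u hua hub; omega
    rw [hua] at hxu
    exact hxu.symm

lemma sum_two_fn {a b : V} (hab : a ≠ b) (m n : ℕ) :
    ∑ t, (if t = a then m else if t = b then n else 0) = m + n := by
  have h : ∀ t, (if t = a then m else if t = b then n else 0)
      = (if t = a then m else 0) + (if t = b then n else 0) := by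
    intro t
    by_cases h1 : t = a
    · subst h1; simp [hab]
    · simp [h1]
  rw [Finset.sum_congr rfl (fun t _ => h t), Finset.sum_add_distrib,
    Finset.sum_ite_eq' Finset.univ a (fun _ => m), Finset.sum_ite_eq' Finset.univ b (fun _ => n)]
  simp

lemma trdn_eq {G : SimpleGraph V} {m : ℕ}
    (hmem : ∃ f : V → ℕ, TRDF G f ∧ m = ∑ v, f v)
    (hlb : ∀ f : V → ℕ, TRDF G f → m ≤ ∑ v, f v) : trdn G = m := by
  unfold trdn
  apply le_antisymm
  · exact Nat.sInf_le hmem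
  · apply le_csInf ⟨m, hmem⟩
    rintro s ⟨f, hf, rfl⟩
    exact hlb f hf

lemma addEdge_comm (G : SimpleGraph V) (u v : V) : addEdge G u v = addEdge G v u := by
  unfold addEdge
  rw [Sym2.eq_swap]

end Weights

theorem stmt4 {V : Type*} [Fintype V] (G : SimpleGraph V) (hiso : NoIsolated G) :
    (trdn G = 4 ∧ (∃ u v, Gᶜ.Adj u v) ∧
      ∀ u v, Gᶜ.Adj u v → trdn (addEdge G u v) = 3) ↔ IsGalaxy Gᶜ := by
  classical
  have hGadj : ∀ a b : V, a ≠ b → ¬Gᶜ.Adj a b → G.Adj a b := by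
    intro a b hne hc
    rw [SimpleGraph.compl_adj] at hc
    push_neg at hc
    by_contra hg
    exact hg (by tauto)
  constructor
  · rintro ⟨h4, ⟨u0, v0, h0⟩, hall⟩
    have lower4 : ∀ f : V → ℕ, TRDF G f → 4 ≤ ∑ v, f v := by
      intro f hf
      have hmem : (∑ v, f v) ∈ {w | ∃ f : V → ℕ, TRDF G f ∧ w = ∑ v, f v} := ⟨f, hf, rfl⟩
      unfold trdn at h4
      have := Nat.sInf_le hmem
      rw [h4] at this
      exact this
    have hcard : 4 ≤ Fintype.card V := by
      have hone : TRDF G (fun _ => 1) :=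
        ⟨fun _ => by norm_num, fun v h => by norm_num at h,
          fun v _ => by obtain ⟨u, hu⟩ := hiso v; exact ⟨u, hu, one_pos⟩⟩
      have := lower4 _ hone
      simpa using this
    have hnb : ∀ a : V, ∃ w, Gᶜ.Adj a w := by
      intro a
      by_contra hc
      push_neg at hc
      have huniv : ∀ x, x ≠ a → G.Adj a x := fun x hxa =>
        hGadj a x (fun h => hxa h.symm) (hc x)
      obtain ⟨b, hab⟩ := hiso a
      set f : V → ℕ := fun t => if t = a then 2 else if t = b then 1 else 0 with hfdef
      have hf : TRDF G f := by
        refine ⟨fun v => ?_, fun v hv => ?_, fun v hv => ?_⟩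
        · simp only [hfdef]; split_ifs <;> omega
        · have hva : v ≠ a ∧ v ≠ b := by
            constructor <;> intro h <;> simp [hfdef, h, hab.ne'] at hv
          exact ⟨a, (huniv v hva.1).symm, by simp [hfdef]⟩
        · by_cases h1 : v = a
          · exact ⟨b, by rw [h1]; exact hab, by simp [hfdef, hab.ne']⟩
          · by_cases h2 : v = b
            · exact ⟨a, by rw [h2]; exact hab.symm, by simp [hfdef]⟩
            · simp [hfdef, h1, h2] at hv
      have hsum : ∑ v, f v = 3 := sum_two_fn hab.ne 2 1
      have := lower4 f hf
      omega
    have hedge : ∀ u v, Gᶜ.Adj u v →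
        (∀ x, Gᶜ.Adj u x → x = v) ∨ (∀ x, Gᶜ.Adj v x → x = u) := by
      intro u v huv
      have h3 := hall u v huv
      have hSne : {w | ∃ f : V → ℕ, TRDF (addEdge G u v) f ∧ w = ∑ v, f v}.Nonempty := by
        by_contra hc
        rw [Set.not_nonempty_iff_eq_empty] at hc
        unfold trdn at h3
        rw [hc, Nat.sInf_empty] at h3
        norm_num at h3
      have hmem := Nat.sInf_mem hSne
      unfold trdn at h3
      rw [h3] at hmem
      obtain ⟨f, hf, hsum⟩ := hmem
      obtain ⟨a, hauniv⟩ := weight3_universal hf hcard (le_of_eq hsum.symm)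
      have key : ∀ z, Gᶜ.Adj a z → (a = u ∧ z = v) ∨ (a = v ∧ z = u) := by
        intro z haz
        rw [SimpleGraph.compl_adj] at haz
        have h' := hauniv z (fun h => haz.1 h.symm)
        rw [addEdge, SimpleGraph.sup_adj] at h'
        rcases h' with h' | h'
        · exact absurd h' haz.2
        · rw [SimpleGraph.fromEdgeSet_adj] at h'
          have hmem' := h'.1
          simp only [Set.mem_singleton_iff] at hmem'
          rwa [Sym2.eq_iff] at hmem'
      obtain ⟨y, hay⟩ := hnb a
      rcases key y hay with ⟨hau, _⟩ | ⟨hav, _⟩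
      · left
        intro x hux
        rcases key x (by rw [hau]; exact hux) with ⟨_, hxv⟩ | ⟨h1, _⟩
        · exact hxv
        · exact absurd (hau.symm.trans h1) huv.ne
      · right
        intro x hvx
        rcases key x (by rw [hav]; exact hvx) with ⟨h1, _⟩ | ⟨_, hxu⟩
        · exact absurd (h1.symm.trans hav) huv.ne
        · exact hxu
    obtain ⟨hid, hiff⟩ := galaxy_of_structure hnb hedge
    refine ⟨galCenter Gᶜ, hid, hiff, hnb, ?_⟩
    by_contra hc
    push_neg at hc
    obtain ⟨t, hct⟩ := hiso (galCenter Gᶜ u0)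
    have h1 : Gᶜ.Adj (galCenter Gᶜ u0) t := by
      rw [hiff]
      exact ⟨hct.ne, Or.inl (hc u0 t)⟩
    rw [SimpleGraph.compl_adj] at h1
    exact h1.2 hct
  · rintro ⟨c, hid, hiff, hnb, v0, w0, hcc⟩
    obtain ⟨x, hx0⟩ := hnb (c v0)
    obtain ⟨y, hy0⟩ := hnb (c w0)
    have hx := hx0
    have hy := hy0
    rw [hiff] at hx hy
    have hcx : c x = c v0 := by
      rcases hx.2 with h | h
      · exact h.symm
      · exact absurd ((h.trans (hid v0)).symm) hx.1
    have hcy : c y = c w0 := by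
      rcases hy.2 with h | h
      · exact h.symm
      · exact absurd ((h.trans (hid w0)).symm) hy.1
    have d1 : c v0 ≠ c w0 := hcc
    have d2 : c v0 ≠ x := hx.1
    have d3 : c w0 ≠ y := hy.1
    have d4 : c w0 ≠ x := by
      intro h
      exact hcc (by rw [← hcx, ← h, hid])
    have d5 : c v0 ≠ y := by
      intro h
      exact hcc (by rw [← hcy, ← h, hid])
    have d6 : x ≠ y := by
      intro h
      exact hcc (by rw [← hcx, h, hcy])
    have hcard : 4 ≤ Fintype.card V := by
      have hc4 : ({c v0, c w0, x, y} : Finset V).card = 4 := by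
        rw [Finset.card_insert_of_notMem (by simp [d1, d2, d5]),
          Finset.card_insert_of_notMem (by simp [d4, d3]),
          Finset.card_pair d6]
      calc 4 = ({c v0, c w0, x, y} : Finset V).card := hc4.symm
        _ ≤ Finset.univ.card := Finset.card_le_card (Finset.subset_univ _)
        _ = Fintype.card V := Finset.card_univ
    -- no Gᶜ-edge between two centers
    have hcenter_adj : G.Adj (c v0) (c w0) := by
      apply hGadj _ _ d1
      intro h
      rw [hiff] at h
      rcases h.2 with h' | h'
      · exact hcc (by rw [h', hid])
      · exact hcc (by rw [h', hid])
    -- lower bound 4 for G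
    have lower4 : ∀ f : V → ℕ, TRDF G f → 4 ≤ ∑ v, f v := by
      intro f hf
      by_contra hlt
      push_neg at hlt
      obtain ⟨a, hauniv⟩ := weight3_universal hf hcard (by omega)
      obtain ⟨z, haz⟩ := hnb a
      have hne := haz.ne
      rw [SimpleGraph.compl_adj] at haz
      exact haz.2 (hauniv z (fun h => hne h.symm))
    -- the weight-4 TRDF
    have mem4 : ∃ f : V → ℕ, TRDF G f ∧ 4 = ∑ v, f v := by
      set f : V → ℕ := fun t => if t = c v0 then 2 else if t = c w0 then 2 else 0 with hfdef
      refine ⟨f, ⟨fun v => ?_, fun v hv => ?_, fun v hv => ?_⟩, ?_⟩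
      · simp only [hfdef]; split_ifs <;> omega
      · have hva : v ≠ c v0 ∧ v ≠ c w0 := by
          constructor <;> intro h <;> simp [hfdef, h, d1] at hv
        have hadj : G.Adj v (c v0) ∨ G.Adj v (c w0) := by
          by_contra hcon
          push_neg at hcon
          have h1 : Gᶜ.Adj v (c v0) := (G.compl_adj _ _).2 ⟨hva.1, hcon.1⟩
          have h2 : Gᶜ.Adj v (c w0) := (G.compl_adj _ _).2 ⟨hva.2, hcon.2⟩
          rw [hiff] at h1 h2
          have e1 : c v0 = c v := by
            rcases h1.2 with h | h
            · exact absurd (h.trans (hid v0)) hva.1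
            · exact h
          have e2 : c w0 = c v := by
            rcases h2.2 with h | h
            · exact absurd (h.trans (hid w0)) hva.2
            · exact h
          exact hcc (e1.trans e2.symm)
        rcases hadj with h | h
        · exact ⟨c v0, h, by simp [hfdef]⟩
        · exact ⟨c w0, h, by simp [hfdef, d1.symm]⟩
      · by_cases h1 : v = c v0
        · exact ⟨c w0, by rw [h1]; exact hcenter_adj, by simp [hfdef, d1.symm]⟩
        · by_cases h2 : v = c w0
          · exact ⟨c v0, by rw [h2]; exact hcenter_adj.symm, by simp [hfdef]⟩
          · simp [hfdef, h1, h2] at hv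
      · rw [sum_two_fn d1 2 2]
    -- the claim for a single oriented complement edge
    have claim : ∀ a b : V, Gᶜ.Adj a b → b = c a → trdn (addEdge G a b) = 3 := by
      intro a b hab hbca
      have hne : a ≠ b := hab.ne
      have huniqnb : ∀ z, Gᶜ.Adj a z → z = b := by
        intro z haz
        rw [hiff] at haz
        rcases haz.2 with h | h
        · have hca : c a = a := by rw [h, hid, ← h]
          exact absurd (hbca.trans hca) hne.symm
        · exact h.trans hbca.symm
      have huniv : ∀ x, x ≠ a → (addEdge G a b).Adj a x := by
        intro x hxa
        by_cases hxb : x = b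
        · subst hxb
          rw [addEdge, SimpleGraph.sup_adj]
          right
          rw [SimpleGraph.fromEdgeSet_adj]
          exact ⟨rfl, hne⟩
        · rw [addEdge, SimpleGraph.sup_adj]
          left
          exact hGadj a x (fun h => hxa h.symm) (fun h => hxb (huniqnb x h))
      set f : V → ℕ := fun t => if t = a then 2 else if t = b then 1 else 0 with hfdef
      have hf : TRDF (addEdge G a b) f := by
        refine ⟨fun v => ?_, fun v hv => ?_, fun v hv => ?_⟩
        · simp only [hfdef]; split_ifs <;> omega
        · have hva : v ≠ a ∧ v ≠ b := by
            constructor <;> intro h <;> simp [hfdef, h, hne.symm] at hv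
          exact ⟨a, (huniv v hva.1).symm, by simp [hfdef]⟩
        · by_cases h1 : v = a
          · exact ⟨b, by rw [h1]; exact huniv b hne.symm, by simp [hfdef, hne.symm]⟩
          · by_cases h2 : v = b
            · exact ⟨a, by rw [h2]; exact (huniv b hne.symm).symm, by simp [hfdef]⟩
            · simp [hfdef, h1, h2] at hv
      have lower3 : ∀ g : V → ℕ, TRDF (addEdge G a b) g → 3 ≤ ∑ v, g v := by
        intro g hg
        by_contra hlt
        push_neg at hlt
        exact weight_le2_false hg hcard (by omega)
      exact trdn_eq ⟨f, hf, (sum_two_fn hne 2 1).symm⟩ lower3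
    refine ⟨trdn_eq mem4 lower4, ⟨c v0, x, hx0⟩, ?_⟩
    intro u v huv
    have huv' := huv
    rw [hiff] at huv'
    rcases huv'.2 with h | h
    · rw [addEdge_comm]
      exact claim v u huv.symm h
    · exact claim u v huv h
end

section
/- If G is an (n-3)-regular graph of order n ≥ 6, then γ_tR(G) = 4 and γ_tR(G+e) = 4 for every edge e of the complement of G (i.e., G is stable). -/
/-- Lower bound: if there is no universal vertex and at least 4 vertices, any TRDF
has weight at least 4. -/
lemma trdf_lb {V : Type*} [Fintype V] (H : SimpleGraph V) (hcard : 4 ≤ Fintype.card V)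
    (huniv : ∀ w, ∃ x, x ≠ w ∧ ¬ H.Adj w x) {f : V → ℕ} (hf : TRDF H f) :
    4 ≤ ∑ v, f v := by
  classical
  obtain ⟨h2, h0, hpos⟩ := hf
  by_contra hlt
  push_neg at hlt
  -- there must be a vertex with value 2
  have hex : ∃ v, f v = 2 := by
    by_contra hno
    push_neg at hno
    have hall : ∀ v, 1 ≤ f v := by
      intro v
      rcases Nat.eq_zero_or_pos (f v) with h | h
      · obtain ⟨u, _, hu2⟩ := h0 v h
        exact absurd hu2 (hno u)
      · exact h
    have hge : Fintype.card V ≤ ∑ v, f v := by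
      calc Fintype.card V = ∑ _v : V, 1 := by simp
        _ ≤ ∑ v, f v := Finset.sum_le_sum fun v _ => hall v
    omega
  obtain ⟨v, hv⟩ := hex
  obtain ⟨u, hadj, hupos⟩ := hpos v (by omega)
  have hvu : v ≠ u := hadj.ne
  obtain ⟨x, hxv, hxadj⟩ := huniv v
  have hxu : x ≠ u := fun h => hxadj (h ▸ hadj)
  have hx0 : f x = 0 := by
    have h3 : (∑ i ∈ ({v, u, x} : Finset V), f i) ≤ ∑ i, f i :=
      Finset.sum_le_sum_of_subset (Finset.subset_univ _)
    rw [Finset.sum_insert (by simp [hvu, Ne.symm hxv]),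
      Finset.sum_pair (Ne.symm hxu)] at h3
    omega
  obtain ⟨y, hy, hy2⟩ := h0 x hx0
  have hyv : y = v := by
    by_contra hne
    have h4 : (∑ i ∈ ({v, y} : Finset V), f i) ≤ ∑ i, f i :=
      Finset.sum_le_sum_of_subset (Finset.subset_univ _)
    rw [Finset.sum_pair (Ne.symm hne)] at h4
    omega
  exact hxadj ((hyv ▸ hy).symm)

/-- Upper bound: two adjacent vertices dominating everything give a TRDF of weight 4. -/
lemma trdf_mem_four {V : Type*} [Fintype V] [DecidableEq V] (H : SimpleGraph V) (p q : V)
    (hpq : H.Adj p q) (hcov : ∀ x, x ≠ p → x ≠ q → H.Adj x p ∨ H.Adj x q) :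
    (4 : ℕ) ∈ {w | ∃ f : V → ℕ, TRDF H f ∧ w = ∑ v, f v} := by
  have hne : p ≠ q := hpq.ne
  set f : V → ℕ := fun x => if x = p then 2 else if x = q then 2 else 0 with hfdef
  have hfp : f p = 2 := by simp [hfdef]
  have hfq : f q = 2 := by simp [hfdef, Ne.symm hne]
  refine ⟨f, ⟨?_, ?_, ?_⟩, ?_⟩
  · intro x
    by_cases h1 : x = p <;> by_cases h2 : x = q <;> simp [hfdef, h1, h2]
  · intro x hx
    have hxp : x ≠ p := by intro h; rw [h, hfp] at hx; omega
    have hxq : x ≠ q := by intro h; rw [h, hfq] at hx; omega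
    rcases hcov x hxp hxq with h | h
    · exact ⟨p, h, hfp⟩
    · exact ⟨q, h, hfq⟩
  · intro x hx
    by_cases h1 : x = p
    · exact ⟨q, h1 ▸ hpq, by omega⟩
    · by_cases h2 : x = q
      · exact ⟨p, h2 ▸ hpq.symm, by omega⟩
      · have hfx : f x = 0 := by
          show (if x = p then 2 else if x = q then 2 else 0) = 0
          rw [if_neg h1, if_neg h2]
        omega
  · have hptw : ∀ x, f x = (if x = p then 2 else 0) + (if x = q then 2 else 0) := by
      intro x
      show (if x = p then 2 else if x = q then 2 else 0) = _
      by_cases h1 : x = p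
      · subst h1; simp [hne]
      · by_cases h2 : x = q
        · subst h2; simp [h1]
        · simp [h1, h2]
    calc (4 : ℕ) = 2 + 2 := rfl
      _ = (∑ x, if x = p then 2 else 0) + (∑ x, if x = q then 2 else 0) := by
          rw [Finset.sum_ite_eq' Finset.univ p (fun _ => 2),
            Finset.sum_ite_eq' Finset.univ q (fun _ => 2)]
          simp
      _ = ∑ x, ((if x = p then 2 else 0) + (if x = q then 2 else 0)) := by
          rw [Finset.sum_add_distrib]
      _ = ∑ x, f x := by
          exact Finset.sum_congr rfl fun x _ => (hptw x).symm

lemma trdn_eq_four' {V : Type*} [Fintype V] (H : SimpleGraph V)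
    (hcard : 4 ≤ Fintype.card V)
    (huniv : ∀ w, ∃ x, x ≠ w ∧ ¬ H.Adj w x)
    (hmem : (4 : ℕ) ∈ {w | ∃ f : V → ℕ, TRDF H f ∧ w = ∑ v, f v}) :
    trdn H = 4 := by
  refine le_antisymm (Nat.sInf_le hmem) ?_
  have hnonempty : {w | ∃ f : V → ℕ, TRDF H f ∧ w = ∑ v, f v}.Nonempty := ⟨4, hmem⟩
  obtain ⟨f, hf, heq⟩ := Nat.sInf_mem hnonempty
  exact le_of_le_of_eq (trdf_lb H hcard huniv hf) heq.symm

theorem stmt6 {V : Type*} [Fintype V] (G : SimpleGraph V) [DecidableRel G.Adj]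
    (hn : 6 ≤ Fintype.card V) (hreg : G.IsRegularOfDegree (Fintype.card V - 3)) :
    trdn G = 4 ∧ ∀ u v, Gᶜ.Adj u v → trdn (addEdge G u v) = 4 := by
  classical
  -- the complement is 2-regular
  have hdegc : ∀ w : V, (Gᶜ.neighborFinset w).card = 2 := by
    intro w
    have h1 : Gᶜ.degree w = Fintype.card V - 1 - G.degree w := SimpleGraph.degree_compl G w
    have h2 : G.degree w = Fintype.card V - 3 := hreg w
    have : Gᶜ.degree w = 2 := by rw [h1, h2]; omega
    rw [SimpleGraph.card_neighborFinset_eq_degree]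
    exact this
  -- no universal vertex in G
  have huG : ∀ w : V, ∃ x, x ≠ w ∧ ¬ G.Adj w x := by
    intro w
    obtain ⟨a, b, hab, hset⟩ := Finset.card_eq_two.mp (hdegc w)
    have ha : Gᶜ.Adj w a := by
      rw [← SimpleGraph.mem_neighborFinset, hset]; simp
    obtain ⟨hne, hnadj⟩ := (SimpleGraph.compl_adj G w a).mp ha
    exact ⟨a, Ne.symm hne, hnadj⟩
  -- no universal vertex in G + uv
  have huH : ∀ u v : V, ∀ w : V, ∃ x, x ≠ w ∧ ¬ (addEdge G u v).Adj w x := by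
    intro u v w
    obtain ⟨a, b, hab, hset⟩ := Finset.card_eq_two.mp (hdegc w)
    have ha : Gᶜ.Adj w a := by
      rw [← SimpleGraph.mem_neighborFinset, hset]; simp
    have hb : Gᶜ.Adj w b := by
      rw [← SimpleGraph.mem_neighborFinset, hset]; simp
    obtain ⟨hwa, hnadja⟩ := (SimpleGraph.compl_adj G w a).mp ha
    obtain ⟨hwb, hnadjb⟩ := (SimpleGraph.compl_adj G w b).mp hb
    by_cases hcase : s(w, a) = s(u, v)
    · refine ⟨b, Ne.symm hwb, ?_⟩
      rw [addEdge, SimpleGraph.sup_adj]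
      rintro (h | h)
      · exact hnadjb h
      · rw [SimpleGraph.fromEdgeSet_adj] at h
        have hwb2 : s(w, b) = s(u, v) := by simpa using h.1
        exact hab (Sym2.congr_right.mp (hcase.trans hwb2.symm))
    · refine ⟨a, Ne.symm hwa, ?_⟩
      rw [addEdge, SimpleGraph.sup_adj]
      rintro (h | h)
      · exact hnadja h
      · rw [SimpleGraph.fromEdgeSet_adj] at h
        exact hcase (by simpa using h.1)
  -- find two adjacent vertices dominating everything
  have hcover : ∃ p q : V, G.Adj p q ∧ ∀ x, x ≠ p → x ≠ q → G.Adj x p ∨ G.Adj x q := by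
    have : Nonempty V := Fintype.card_pos_iff.mp (by omega)
    obtain ⟨u0⟩ := this
    obtain ⟨a, b, hab, hset⟩ := Finset.card_eq_two.mp (hdegc u0)
    have ha : Gᶜ.Adj u0 a := by
      rw [← SimpleGraph.mem_neighborFinset, hset]; simp
    have hb : Gᶜ.Adj u0 b := by
      rw [← SimpleGraph.mem_neighborFinset, hset]; simp
    set B : Finset V := insert u0 ((Gᶜ.neighborFinset u0) ∪
      ((Gᶜ.neighborFinset a).erase u0) ∪ ((Gᶜ.neighborFinset b).erase u0)) with hB
    have hcea : ((Gᶜ.neighborFinset a).erase u0).card = 1 := by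
      rw [Finset.card_erase_of_mem
        (by rw [SimpleGraph.mem_neighborFinset]; exact ha.symm), hdegc a]
    have hceb : ((Gᶜ.neighborFinset b).erase u0).card = 1 := by
      rw [Finset.card_erase_of_mem
        (by rw [SimpleGraph.mem_neighborFinset]; exact hb.symm), hdegc b]
    have hBcard : B.card ≤ 5 := by
      have hc1 := Finset.card_insert_le u0 ((Gᶜ.neighborFinset u0) ∪
        ((Gᶜ.neighborFinset a).erase u0) ∪ ((Gᶜ.neighborFinset b).erase u0))
      have hc2 := Finset.card_union_le ((Gᶜ.neighborFinset u0) ∪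
        ((Gᶜ.neighborFinset a).erase u0)) ((Gᶜ.neighborFinset b).erase u0)
      have hc3 := Finset.card_union_le (Gᶜ.neighborFinset u0)
        ((Gᶜ.neighborFinset a).erase u0)
      have hc4 := hdegc u0
      rw [hB]
      omega
    obtain ⟨q, hq⟩ : ∃ q : V, q ∉ B := by
      by_contra h
      push_neg at h
      have hsub : Finset.univ ⊆ B := fun x _ => h x
      have := Finset.card_le_card hsub
      rw [Finset.card_univ] at this
      omega
    have hqu : q ≠ u0 := fun h => hq (by rw [hB, h]; exact Finset.mem_insert_self _ _)
    have hqnu : q ∉ Gᶜ.neighborFinset u0 := fun h => hq (by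
      rw [hB]; exact Finset.mem_insert_of_mem (Finset.mem_union_left _
        (Finset.mem_union_left _ h)))
    have hqna : q ∉ (Gᶜ.neighborFinset a).erase u0 := fun h => hq (by
      rw [hB]; exact Finset.mem_insert_of_mem (Finset.mem_union_left _
        (Finset.mem_union_right _ h)))
    have hqnb : q ∉ (Gᶜ.neighborFinset b).erase u0 := fun h => hq (by
      rw [hB]; exact Finset.mem_insert_of_mem (Finset.mem_union_right _ h))
    have hadjuq : G.Adj u0 q := by
      by_contra h
      exact hqnu ((SimpleGraph.mem_neighborFinset _ _ _).mpr
        ((SimpleGraph.compl_adj G u0 q).mpr ⟨Ne.symm hqu, h⟩))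
    have haB : a ∈ B := by
      rw [hB]
      exact Finset.mem_insert_of_mem (Finset.mem_union_left _ (Finset.mem_union_left _
        ((SimpleGraph.mem_neighborFinset _ _ _).mpr ha)))
    have hbB : b ∈ B := by
      rw [hB]
      exact Finset.mem_insert_of_mem (Finset.mem_union_left _ (Finset.mem_union_left _
        ((SimpleGraph.mem_neighborFinset _ _ _).mpr hb)))
    have hqa : q ≠ a := fun h => hq (h ▸ haB)
    have hqb : q ≠ b := fun h => hq (h ▸ hbB)
    have hadjaq : G.Adj a q := by
      by_contra h
      exact hqna (Finset.mem_erase.mpr ⟨hqu,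
        (SimpleGraph.mem_neighborFinset _ _ _).mpr
          ((SimpleGraph.compl_adj G a q).mpr ⟨Ne.symm hqa, h⟩)⟩)
    have hadjbq : G.Adj b q := by
      by_contra h
      exact hqnb (Finset.mem_erase.mpr ⟨hqu,
        (SimpleGraph.mem_neighborFinset _ _ _).mpr
          ((SimpleGraph.compl_adj G b q).mpr ⟨Ne.symm hqb, h⟩)⟩)
    refine ⟨u0, q, hadjuq, ?_⟩
    intro x hxu hxq
    by_cases h : G.Adj x u0
    · exact Or.inl h
    · right
      have hx : x ∈ Gᶜ.neighborFinset u0 := (SimpleGraph.mem_neighborFinset _ _ _).mpr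
        ((SimpleGraph.compl_adj G u0 x).mpr ⟨Ne.symm hxu, fun h' => h h'.symm⟩)
      rw [hset] at hx
      rcases Finset.mem_insert.mp hx with h' | h'
      · exact h' ▸ hadjaq
      · exact (Finset.mem_singleton.mp h') ▸ hadjbq
  obtain ⟨p, q, hpq, hcov⟩ := hcover
  constructor
  · exact trdn_eq_four' G (by omega) huG (trdf_mem_four G p q hpq hcov)
  · intro u v _
    have hpq' : (addEdge G u v).Adj p q := by
      rw [addEdge, SimpleGraph.sup_adj]; exact Or.inl hpq
    have hcov' : ∀ x, x ≠ p → x ≠ q →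
        (addEdge G u v).Adj x p ∨ (addEdge G u v).Adj x q := by
      intro x h1 h2
      refine (hcov x h1 h2).imp (fun h => ?_) (fun h => ?_) <;>
        · rw [addEdge, SimpleGraph.sup_adj]; exact Or.inl h
    exact trdn_eq_four' (addEdge G u v) (by omega) (huH u v)
      (trdf_mem_four (addEdge G u v) p q hpq' hcov')
end

section
/- If G is the disjoint union of k ≥ 2 complete graphs, each of order at least 3, then γ_tR(G) = 3k and γ_tR(G+e) = 3k - 2 for every edge e of the complement of G; that is, G is 3k-γ_tR-edge-supercritical. -/
set_option linter.unusedSectionVars false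

section helpers
variable {V : Type*} [Fintype V] [DecidableEq V] {k : ℕ}

def baseF (part : V → Fin k) (a b : Fin k → V) : V → ℕ :=
  fun v => if v = a (part v) then 2 else if v = b (part v) then 1 else 0

lemma baseF_le_two (part : V → Fin k) (a b : Fin k → V) (v : V) :
    baseF part a b v ≤ 2 := by
  unfold baseF; split
  · omega
  · split <;> omega

lemma baseF_a (part : V → Fin k) (a b : Fin k → V) (hpa : ∀ i, part (a i) = i) (i : Fin k) :
    baseF part a b (a i) = 2 := by
  unfold baseF; rw [hpa i, if_pos rfl]

lemma baseF_b (part : V → Fin k) (a b : Fin k → V) (hpb : ∀ i, part (b i) = i)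
    (hne : ∀ i, a i ≠ b i) (i : Fin k) :
    baseF part a b (b i) = 1 := by
  unfold baseF; rw [hpb i, if_neg (Ne.symm (hne i)), if_pos rfl]

lemma baseF_pos {part : V → Fin k} {a b : Fin k → V} {v : V}
    (h : 0 < baseF part a b v) : v = a (part v) ∨ v = b (part v) := by
  by_contra hc
  push_neg at hc
  unfold baseF at h
  rw [if_neg hc.1, if_neg hc.2] at h
  omega

lemma baseF_zero {part : V → Fin k} {a b : Fin k → V} {v : V}
    (h : baseF part a b v = 0) : v ≠ a (part v) ∧ v ≠ b (part v) := by
  unfold baseF at h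
  split_ifs at h with ha hb
  · exact ⟨ha, hb⟩

lemma trdf_fiber_ge_three {part : V → Fin k} {H : SimpleGraph V} {f : V → ℕ} (hf : TRDF H f)
    {p : Fin k} (hc : 3 ≤ (Finset.univ.filter (fun v => part v = p)).card)
    (hnb : ∀ w x, part w = p → H.Adj w x → part x = p) :
    3 ≤ ∑ v ∈ Finset.univ.filter (fun v => part v = p), f v := by
  set s := Finset.univ.filter (fun v => part v = p) with hs
  by_contra hcon
  push_neg at hcon
  by_cases h2 : ∃ w ∈ s, f w = 2
  · obtain ⟨w, hw, hfw⟩ := h2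
    obtain ⟨x, hax, hfx⟩ := hf.2.2 w (by omega)
    have hws : part w = p := by simpa [hs] using hw
    have hxs : x ∈ s := by
      simp only [hs, Finset.mem_filter, Finset.mem_univ, true_and]
      exact hnb w x hws hax
    have hwx : w ≠ x := hax.ne
    have hsub : {w, x} ⊆ s := by
      intro y hy; simp only [Finset.mem_insert, Finset.mem_singleton] at hy
      rcases hy with rfl | rfl <;> assumption
    have h := Finset.sum_le_sum_of_subset (f := f) hsub
    rw [Finset.sum_pair hwx] at h
    omega
  · push_neg at h2
    have hx0 : ∃ w ∈ s, f w = 0 := by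
      by_contra hall
      push_neg at hall
      have h1 : ∀ w ∈ s, 1 ≤ f w := fun w hw => Nat.one_le_iff_ne_zero.mpr (hall w hw)
      have h := Finset.sum_le_sum h1
      rw [Finset.sum_const, smul_eq_mul, mul_one] at h
      omega
    obtain ⟨w, hw, hfw⟩ := hx0
    obtain ⟨x, hax, hfx⟩ := hf.2.1 w hfw
    have hws : part w = p := by simpa [hs] using hw
    have hxs : x ∈ s := by
      simp only [hs, Finset.mem_filter, Finset.mem_univ, true_and]
      exact hnb w x hws hax
    exact h2 x hxs hfx

lemma trdf_fiber_ge_two {part : V → Fin k} {H : SimpleGraph V} {f : V → ℕ} (hf : TRDF H f)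
    {p : Fin k} {u : V} (hc : 3 ≤ (Finset.univ.filter (fun v => part v = p)).card)
    (hnb : ∀ w x, part w = p → w ≠ u → H.Adj w x → part x = p) :
    2 ≤ ∑ v ∈ Finset.univ.filter (fun v => part v = p), f v := by
  set s := Finset.univ.filter (fun v => part v = p) with hs
  by_contra hcon
  push_neg at hcon
  have hno2 : ∀ x ∈ s, f x ≠ 2 := by
    intro x hx h
    have := Finset.single_le_sum (f := f) (fun i _ => Nat.zero_le _) hx
    omega
  have hx0 : ∃ w ∈ s.erase u, f w = 0 := by
    by_contra hall
    push_neg at hall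
    have h1 : ∀ w ∈ s.erase u, 1 ≤ f w := fun w hw => Nat.one_le_iff_ne_zero.mpr (hall w hw)
    have h := Finset.sum_le_sum h1
    rw [Finset.sum_const, smul_eq_mul, mul_one] at h
    have hce : 2 ≤ (s.erase u).card := by
      have := Finset.pred_card_le_card_erase (s := s) (a := u)
      omega
    have hsub := Finset.sum_le_sum_of_subset (f := f) (Finset.erase_subset u s)
    omega
  obtain ⟨w, hw, hfw⟩ := hx0
  rw [Finset.mem_erase] at hw
  obtain ⟨x, hax, hfx⟩ := hf.2.1 w hfw
  have hws : part w = p := by simpa [hs] using hw.2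
  have hxs : x ∈ s := by
    simp only [hs, Finset.mem_filter, Finset.mem_univ, true_and]
    exact hnb w x hws hw.1 hax
  exact hno2 x hxs hfx

lemma fiber_sum_construct (part : V → Fin k)
    (a b : Fin k → V) (hpa : ∀ i, part (a i) = i) (hpb : ∀ i, part (b i) = i)
    (hne : ∀ i, a i ≠ b i) (i : Fin k) :
    ∑ v ∈ Finset.univ.filter (fun v => part v = i), baseF part a b v = 3 := by
  have step : ∀ v ∈ Finset.univ.filter (fun v => part v = i),
      baseF part a b v
      = (if v = a i then 2 else 0) + (if v = b i then 1 else 0) := by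
    intro v hv
    rw [Finset.mem_filter] at hv
    unfold baseF
    rw [hv.2]
    by_cases h1 : v = a i
    · have h2 : v ≠ b i := by rw [h1]; exact hne i
      simp [h1, h2]; exact hne i
    · simp [h1]
  rw [Finset.sum_congr rfl step, Finset.sum_add_distrib,
    Finset.sum_ite_eq', Finset.sum_ite_eq']
  have hai : a i ∈ Finset.univ.filter (fun v => part v = i) := by simp [hpa i]
  have hbi : b i ∈ Finset.univ.filter (fun v => part v = i) := by simp [hpb i]
  rw [if_pos hai, if_pos hbi]

end helpers

theorem stmt9 {V : Type*} [Fintype V] [DecidableEq V] (G : SimpleGraph V)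
    (k : ℕ) (hk : 2 ≤ k)
    (part : V → Fin k) (hsurj : Function.Surjective part)
    (hcard : ∀ i : Fin k, 3 ≤ (Finset.univ.filter (fun v => part v = i)).card)
    (hadj : ∀ u v, G.Adj u v ↔ u ≠ v ∧ part u = part v) :
    trdn G = 3 * k ∧ ∀ u v, Gᶜ.Adj u v → trdn (addEdge G u v) = 3 * k - 2 := by
  -- choose two distinct vertices in each fiber
  have hab : ∀ i : Fin k, ∃ x y : V, part x = i ∧ part y = i ∧ x ≠ y := by
    intro i
    obtain ⟨x, hx, y, hy, hxy⟩ := Finset.one_lt_card.mp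
      (show 1 < (Finset.univ.filter (fun v => part v = i)).card by have := hcard i; omega)
    rw [Finset.mem_filter] at hx hy
    exact ⟨x, y, hx.2, hy.2, hxy⟩
  choose a b hpa hpb hne using hab
  have hf0trdf : TRDF G (baseF part a b) := by
    refine ⟨baseF_le_two part a b, ?_, ?_⟩
    · intro w hw
      obtain ⟨h1, _⟩ := baseF_zero hw
      refine ⟨a (part w), ?_, baseF_a part a b hpa (part w)⟩
      rw [hadj]
      exact ⟨h1, (hpa (part w)).symm⟩
    · intro w hw
      rcases baseF_pos hw with h1 | h1
      · refine ⟨b (part w), ?_, ?_⟩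
        · rw [hadj]
          refine ⟨?_, (hpb (part w)).symm⟩
          have h' := hne (part w); rw [← h1] at h'; exact h'
        · rw [baseF_b part a b hpb hne (part w)]; omega
      · refine ⟨a (part w), ?_, ?_⟩
        · rw [hadj]
          refine ⟨?_, (hpa (part w)).symm⟩
          have h' := Ne.symm (hne (part w)); rw [← h1] at h'; exact h'
        · rw [baseF_a part a b hpa (part w)]; omega
  have hsum0 : ∑ w, baseF part a b w = 3 * k := by
    rw [← Finset.sum_fiberwise Finset.univ part (baseF part a b)]
    rw [Finset.sum_congr rfl (fun i _ => fiber_sum_construct part a b hpa hpb hne i)]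
    simp [Finset.sum_const, mul_comm]
  constructor
  · refine le_antisymm (Nat.sInf_le ⟨baseF part a b, hf0trdf, hsum0.symm⟩) ?_
    refine le_csInf ⟨3 * k, baseF part a b, hf0trdf, hsum0.symm⟩ ?_
    rintro w ⟨f, hf, rfl⟩
    rw [← Finset.sum_fiberwise Finset.univ part f]
    calc 3 * k = ∑ _i : Fin k, 3 := by simp [Finset.sum_const, mul_comm]
      _ ≤ ∑ i, ∑ v ∈ Finset.univ.filter (fun v => part v = i), f v := by
        refine Finset.sum_le_sum fun i _ => trdf_fiber_ge_three hf (hcard i) ?_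
        intro w x hw hx
        rw [← hw]
        exact (((hadj w x).mp hx).2).symm
  · intro u v huv
    rw [SimpleGraph.compl_adj] at huv
    obtain ⟨hune, hnadj⟩ := huv
    have hpne : part u ≠ part v := by
      intro h
      exact hnadj ((hadj u v).mpr ⟨hune, h⟩)
    have hAdd : ∀ x y, (addEdge G u v).Adj x y ↔
        (G.Adj x y ∨ ((x = u ∧ y = v) ∨ (x = v ∧ y = u))) := by
      intro x y
      simp only [addEdge, SimpleGraph.sup_adj, SimpleGraph.fromEdgeSet_adj,
        Set.mem_singleton_iff, Sym2.eq_iff]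
      constructor
      · rintro (h | ⟨hm, _⟩)
        · exact Or.inl h
        · exact Or.inr hm
      · rintro (h | ⟨rfl, rfl⟩ | ⟨rfl, rfl⟩)
        · exact Or.inl h
        · exact Or.inr ⟨by tauto, hune⟩
        · exact Or.inr ⟨by tauto, hune.symm⟩
    -- the modified function
    set g : V → ℕ := fun w => if w = u ∨ w = v then 2
      else if part w = part u ∨ part w = part v then 0 else baseF part a b w with hg
    have hgu : g u = 2 := by simp [hg]
    have hgv : g v = 2 := by simp [hg]
    have hgother : ∀ w, part w ≠ part u → part w ≠ part v → g w = baseF part a b w := by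
      intro w h1 h2
      have hwu : w ≠ u := fun h => h1 (by rw [h])
      have hwv : w ≠ v := fun h => h2 (by rw [h])
      simp [hg, hwu, hwv, h1, h2]
    have hmsum : ∑ p : Fin k,
        (if p = part u then (2:ℕ) else if p = part v then 2 else 3) = 3 * k - 2 := by
      have h2 : ∑ p : Fin k, ((if p = part u then (2:ℕ) else if p = part v then 2 else 3)
          + ((if p = part u then 1 else 0) + (if p = part v then 1 else 0)))
          = ∑ _p : Fin k, 3 := by
        refine Finset.sum_congr rfl fun p _ => ?_
        by_cases h1 : p = part u
        · subst h1; simp [hpne]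
        · by_cases hv2 : p = part v
          · subst hv2; simp [h1]
          · simp [h1, hv2]
      rw [Finset.sum_add_distrib, Finset.sum_add_distrib,
        Finset.sum_ite_eq', Finset.sum_ite_eq'] at h2
      simp only [Finset.mem_univ, if_pos, Finset.sum_const, Finset.card_univ,
        Fintype.card_fin, smul_eq_mul] at h2
      omega
    have hgfib : ∀ p : Fin k, ∑ w ∈ Finset.univ.filter (fun w => part w = p), g w
        = (if p = part u then 2 else if p = part v then 2 else 3) := by
      intro p
      by_cases h1 : p = part u
      · subst h1
        rw [if_pos rfl]
        have step : ∀ w ∈ Finset.univ.filter (fun w => part w = part u), g w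
            = if w = u then 2 else 0 := by
          intro w hw
          rw [Finset.mem_filter] at hw
          by_cases hwu : w = u
          · simp [hg, hwu]
          · have hwv : w ≠ v := by
              intro h; rw [h] at hw; exact hpne hw.2.symm
            simp [hg, hwu, hwv, hw.2]
        rw [Finset.sum_congr rfl step, Finset.sum_ite_eq']
        simp
      · by_cases h2 : p = part v
        · subst h2
          rw [if_neg h1, if_pos rfl]
          have step : ∀ w ∈ Finset.univ.filter (fun w => part w = part v), g w
              = if w = v then 2 else 0 := by
            intro w hw
            rw [Finset.mem_filter] at hw
            by_cases hwv : w = v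
            · simp [hg, hwv]
            · have hwu : w ≠ u := by
                intro h; rw [h] at hw; exact hpne hw.2
              simp [hg, hwu, hwv, hw.2]
          rw [Finset.sum_congr rfl step, Finset.sum_ite_eq']
          simp
        · rw [if_neg h1, if_neg h2]
          have step : ∀ w ∈ Finset.univ.filter (fun w => part w = p), g w
              = baseF part a b w := by
            intro w hw
            rw [Finset.mem_filter] at hw
            exact hgother w (by rw [hw.2]; exact h1) (by rw [hw.2]; exact h2)
          rw [Finset.sum_congr rfl step]
          exact fiber_sum_construct part a b hpa hpb hne p
    have hgsum : ∑ w, g w = 3 * k - 2 := by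
      rw [← Finset.sum_fiberwise Finset.univ part g,
        Finset.sum_congr rfl (fun p _ => hgfib p), hmsum]
    have hgtrdf : TRDF (addEdge G u v) g := by
      refine ⟨?_, ?_, ?_⟩
      · intro w
        simp only [hg]
        split
        · omega
        · split
          · omega
          · exact baseF_le_two part a b w
      · intro w hw
        have hwu : w ≠ u := by intro h; rw [h, hgu] at hw; omega
        have hwv : w ≠ v := by intro h; rw [h, hgv] at hw; omega
        by_cases h1 : part w = part u
        · refine ⟨u, ?_, hgu⟩
          rw [hAdd]
          exact Or.inl ((hadj w u).mpr ⟨hwu, h1⟩)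
        · by_cases h2 : part w = part v
          · refine ⟨v, ?_, hgv⟩
            rw [hAdd]
            exact Or.inl ((hadj w v).mpr ⟨hwv, h2⟩)
          · have hbw : baseF part a b w = 0 := by
              rw [← hgother w h1 h2]; exact hw
            obtain ⟨ha1, _⟩ := baseF_zero hbw
            refine ⟨a (part w), ?_, ?_⟩
            · rw [hAdd]
              exact Or.inl ((hadj w (a (part w))).mpr ⟨ha1, (hpa (part w)).symm⟩)
            · rw [hgother (a (part w)) (by rw [hpa]; exact h1) (by rw [hpa]; exact h2)]
              exact baseF_a part a b hpa (part w)
      · intro w hw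
        by_cases hwu : w = u
        · subst hwu
          refine ⟨v, ?_, by rw [hgv]; omega⟩
          rw [hAdd]
          exact Or.inr (Or.inl ⟨rfl, rfl⟩)
        · by_cases hwv : w = v
          · subst hwv
            refine ⟨u, ?_, by rw [hgu]; omega⟩
            rw [hAdd]
            exact Or.inr (Or.inr ⟨rfl, rfl⟩)
          · have h1 : part w ≠ part u := by
              intro h
              have := hgfib (part u)
              -- w is in fiber of part u, w ≠ u, so g w = 0
              simp only [hg, hwu, hwv, false_or, or_false] at hw
              rw [if_neg (by tauto), if_pos (Or.inl h)] at hw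
              omega
            have h2 : part w ≠ part v := by
              intro h
              simp only [hg, hwu, hwv, false_or, or_false] at hw
              rw [if_neg (by tauto), if_pos (Or.inr h)] at hw
              omega
            have hbw : 0 < baseF part a b w := by
              rw [← hgother w h1 h2]; exact hw
            rcases baseF_pos hbw with hcase | hcase
            · refine ⟨b (part w), ?_, ?_⟩
              · rw [hAdd]
                refine Or.inl ((hadj w (b (part w))).mpr ⟨?_, (hpb (part w)).symm⟩)
                have h' := hne (part w); rw [← hcase] at h'; exact h'
              · rw [hgother (b (part w)) (by rw [hpb]; exact h1) (by rw [hpb]; exact h2),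
                  baseF_b part a b hpb hne (part w)]
                omega
            · refine ⟨a (part w), ?_, ?_⟩
              · rw [hAdd]
                refine Or.inl ((hadj w (a (part w))).mpr ⟨?_, (hpa (part w)).symm⟩)
                have h' := Ne.symm (hne (part w)); rw [← hcase] at h'; exact h'
              · rw [hgother (a (part w)) (by rw [hpa]; exact h1) (by rw [hpa]; exact h2),
                  baseF_a part a b hpa (part w)]
                omega
    refine le_antisymm (Nat.sInf_le ⟨g, hgtrdf, hgsum.symm⟩) ?_
    refine le_csInf ⟨3 * k - 2, g, hgtrdf, hgsum.symm⟩ ?_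
    rintro w ⟨f, hf, rfl⟩
    rw [← Finset.sum_fiberwise Finset.univ part f, ← hmsum]
    refine Finset.sum_le_sum fun p _ => ?_
    by_cases h1 : p = part u
    · subst h1
      rw [if_pos rfl]
      refine trdf_fiber_ge_two (u := u) hf (hcard _) ?_
      intro w x hw hwu hx
      rw [hAdd] at hx
      rcases hx with h | ⟨rfl, rfl⟩ | ⟨rfl, rfl⟩
      · rw [← hw]; exact (((hadj w x).mp h).2).symm
      · exact absurd rfl hwu
      · exact absurd hw.symm hpne
    · by_cases h2 : p = part v
      · subst h2
        rw [if_neg h1, if_pos rfl]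
        refine trdf_fiber_ge_two (u := v) hf (hcard _) ?_
        intro w x hw hwv hx
        rw [hAdd] at hx
        rcases hx with h | ⟨rfl, rfl⟩ | ⟨rfl, rfl⟩
        · rw [← hw]; exact (((hadj w x).mp h).2).symm
        · exact absurd hw hpne
        · exact absurd rfl hwv
      · rw [if_neg h1, if_neg h2]
        refine trdf_fiber_ge_three hf (hcard _) ?_
        intro w x hw hx
        rw [hAdd] at hx
        rcases hx with h | ⟨rfl, rfl⟩ | ⟨rfl, rfl⟩
        · rw [← hw]; exact (((hadj w x).mp h).2).symm
        · exact absurd hw.symm h1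
        · exact absurd hw.symm h2
end

section
/- If G is a connected graph of order n ≥ 3, then γ_tR(G) ∈ {3,4} if and only if γ_t(G) = 2. Moreover, if γ_tR(G) = 3 then γ(G) = 1, and if γ_tR(G) = 4 then γ(G) = 2. -/
/-- The domination number. -/
noncomputable def domn {V : Type*} [Fintype V] (G : SimpleGraph V) : ℕ :=
  sInf {k | ∃ S : Finset V, (∀ v, v ∉ S → ∃ u ∈ S, G.Adj v u) ∧ S.card = k}

/-- The total domination number. -/
noncomputable def tdomn {V : Type*} [Fintype V] (G : SimpleGraph V) : ℕ :=
  sInf {k | ∃ S : Finset V, (∀ v, ∃ u ∈ S, G.Adj v u) ∧ S.card = k}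

section Helpers

variable {V : Type*} [Fintype V] {G : SimpleGraph V}

private lemma sum_two (f : V → ℕ) {a b : V} (h : a ≠ b) :
    f a + f b ≤ ∑ v, f v := by
  classical
  calc f a + f b = ∑ x ∈ ({a, b} : Finset V), f x := (Finset.sum_pair h).symm
    _ ≤ _ := Finset.sum_le_sum_of_subset (Finset.subset_univ _)

private lemma sum_three (f : V → ℕ) {a b c : V} (hab : a ≠ b) (hac : a ≠ c) (hbc : b ≠ c) :
    f a + f b + f c ≤ ∑ v, f v := by
  classical
  have h1 : ∑ x ∈ ({a, b, c} : Finset V), f x = f a + (f b + f c) := by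
    rw [Finset.sum_insert (by simp [hab, hac]), Finset.sum_pair hbc]
  have h2 : ∑ x ∈ ({a, b, c} : Finset V), f x ≤ ∑ v, f v :=
    Finset.sum_le_sum_of_subset (Finset.subset_univ _)
  omega

private lemma sum_four (f : V → ℕ) {a b c d : V} (hab : a ≠ b) (hac : a ≠ c) (had : a ≠ d)
    (hbc : b ≠ c) (hbd : b ≠ d) (hcd : c ≠ d) :
    f a + f b + f c + f d ≤ ∑ v, f v := by
  classical
  have h1 : ∑ x ∈ ({a, b, c, d} : Finset V), f x = f a + (f b + (f c + f d)) := by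
    rw [Finset.sum_insert (by simp [hab, hac, had]),
      Finset.sum_insert (by simp [hbc, hbd]), Finset.sum_pair hcd]
  have h2 : ∑ x ∈ ({a, b, c, d} : Finset V), f x ≤ ∑ v, f v :=
    Finset.sum_le_sum_of_subset (Finset.subset_univ _)
  omega

private lemma noIso (hn : 2 ≤ Fintype.card V) (hconn : G.Connected) : NoIsolated G := by
  intro v
  have : Nontrivial V := Fintype.one_lt_card_iff_nontrivial.mp (by omega)
  obtain ⟨u, hu⟩ := exists_ne v
  obtain ⟨p⟩ := hconn v u
  cases p with
  | nil => exact absurd rfl (Ne.symm hu)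
  | cons h _ => exact ⟨_, h⟩

private lemma card_le_of_all_pos {f : V → ℕ} (h : ∀ v, f v ≠ 0) :
    Fintype.card V ≤ ∑ v, f v := by
  rw [← Finset.card_univ, Finset.card_eq_sum_ones]
  exact Finset.sum_le_sum fun i _ => Nat.one_le_iff_ne_zero.mpr (h i)

/-- A connected graph on 3 or 4 vertices has a total dominating pair. -/
private lemma pair_of_small (hn3 : 3 ≤ Fintype.card V) (hn4 : Fintype.card V ≤ 4)
    (hconn : G.Connected) :
    ∃ a b, G.Adj a b ∧ ∀ v, G.Adj v a ∨ G.Adj v b := by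
  classical
  have hiso : NoIsolated G := noIso (by omega) hconn
  have : Nonempty V := Fintype.card_pos_iff.mp (by omega)
  obtain ⟨u⟩ := this
  obtain ⟨v, huv⟩ := hiso u
  by_cases hall : ∀ z, G.Adj z u ∨ G.Adj z v
  · exact ⟨u, v, huv, hall⟩
  push_neg at hall
  obtain ⟨w, hwu, hwv⟩ := hall
  have hwune : w ≠ u := by rintro rfl; exact hwv huv
  have hwvne : w ≠ v := by rintro rfl; exact hwu huv.symm
  obtain ⟨x, hwx⟩ := hiso w
  have hxu : x ≠ u := by rintro rfl; exact hwu hwx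
  have hxv : x ≠ v := by rintro rfl; exact hwv hwx
  have hxw : x ≠ w := hwx.ne'
  have hcard4 : ({u, v, w, x} : Finset V).card = 4 := by
    rw [Finset.card_insert_of_notMem (by simp [huv.ne, hwune.symm, hxu.symm]),
      Finset.card_insert_of_notMem (by simp [hwvne.symm, hxv.symm]),
      Finset.card_pair (Ne.symm hxw)]
  have hVle : 4 ≤ Fintype.card V := hcard4 ▸ Finset.card_le_univ _
  have huniv : ({u, v, w, x} : Finset V) = Finset.univ :=
    Finset.eq_univ_of_card _ (by omega)
  have hmem : ∀ z : V, z = u ∨ z = v ∨ z = w ∨ z = x := by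
    intro z
    have := huniv ▸ Finset.mem_univ z
    simpa using this
  obtain ⟨p⟩ := hconn w u
  obtain ⟨d, _, hdS, hdnS⟩ := p.exists_boundary_dart ({w, x} : Set V) (by simp)
    (by simp [Ne.symm hwune, Ne.symm hxu])
  have hd := d.adj
  have hsndu : d.snd = u ∨ d.snd = v := by
    rcases hmem d.snd with h | h | h | h
    · exact Or.inl h
    · exact Or.inr h
    · exact absurd (by simp [h]) hdnS
    · exact absurd (by simp [h]) hdnS
  rcases hdS with hfw | hfx
  · -- d.fst = w : impossible since w not adjacent to u or v
    have haw : G.Adj w d.snd := by rw [← hfw]; exact hd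
    rcases hsndu with h | h
    · exact absurd (h ▸ haw) hwu
    · exact absurd (h ▸ haw) hwv
  · have hfx' : d.fst = x := hfx
    have hax : G.Adj x d.snd := by rw [← hfx']; exact hd
    rcases hsndu with h | h
    · -- x adjacent to u : pair (u, x)
      have hxu' : G.Adj x u := h ▸ hax
      refine ⟨u, x, hxu'.symm, ?_⟩
      intro z
      rcases hmem z with rfl | rfl | rfl | rfl
      · exact Or.inr hxu'.symm
      · exact Or.inl huv.symm
      · exact Or.inr hwx
      · exact Or.inl hxu'
    · -- x adjacent to v : pair (v, x)
      have hxv' : G.Adj x v := h ▸ hax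
      refine ⟨v, x, hxv'.symm, ?_⟩
      intro z
      rcases hmem z with rfl | rfl | rfl | rfl
      · exact Or.inl huv
      · exact Or.inr hxv'.symm
      · exact Or.inr hwx
      · exact Or.inl hxv'

/-- From a TRDF of weight at most 4, extract a total dominating pair. -/
private lemma trdf_pair (hn3 : 3 ≤ Fintype.card V) (hconn : G.Connected)
    {f : V → ℕ} (hf : TRDF G f) (hsum : ∑ v, f v ≤ 4) :
    ∃ a b, G.Adj a b ∧ ∀ v, G.Adj v a ∨ G.Adj v b := by
  classical
  by_cases hz : ∃ v0, f v0 = 0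
  · obtain ⟨v0, hv0⟩ := hz
    obtain ⟨a, _, ha2⟩ := hf.2.1 v0 hv0
    obtain ⟨b, hab, hbpos⟩ := hf.2.2 a (by omega)
    have hba : b ≠ a := hab.ne'
    refine ⟨a, b, hab, ?_⟩
    intro z
    by_cases hza : z = a
    · exact Or.inr (hza ▸ hab)
    by_cases hzb : z = b
    · exact Or.inl (hzb ▸ hab.symm)
    by_cases hz0 : f z = 0
    · obtain ⟨c, hzc, hc2⟩ := hf.2.1 z hz0
      by_cases hca : c = a
      · exact Or.inl (hca ▸ hzc)
      by_cases hcb : c = b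
      · exact Or.inr (hcb ▸ hzc)
      · exfalso
        have := sum_three f hab.ne (Ne.symm hca) (Ne.symm hcb)
        omega
    · obtain ⟨t, hzt, htpos⟩ := hf.2.2 z (Nat.pos_of_ne_zero hz0)
      by_cases hta : t = a
      · exact Or.inl (hta ▸ hzt)
      by_cases htb : t = b
      · exact Or.inr (htb ▸ hzt)
      · exfalso
        have := sum_four f hab.ne (Ne.symm hza) (Ne.symm hta) (Ne.symm hzb) (Ne.symm htb)
          (fun h => hzt.ne' (h.symm))
        omega
  · push_neg at hz
    exact pair_of_small hn3 (le_trans (card_le_of_all_pos hz) hsum) hconn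

/-- From a TRDF of weight 3, extract a dominating vertex. -/
private lemma trdf_domvert (hn3 : 3 ≤ Fintype.card V) (hconn : G.Connected)
    {f : V → ℕ} (hf : TRDF G f) (hsum : ∑ v, f v = 3) :
    ∃ a, ∀ v, v ≠ a → G.Adj v a := by
  classical
  by_cases hz : ∃ v0, f v0 = 0
  · obtain ⟨v0, hv0⟩ := hz
    obtain ⟨a, _, ha2⟩ := hf.2.1 v0 hv0
    obtain ⟨b, hab, hbpos⟩ := hf.2.2 a (by omega)
    have hba : b ≠ a := hab.ne'
    refine ⟨a, ?_⟩
    intro z hza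
    by_cases hzb : z = b
    · exact hzb ▸ hab.symm
    by_cases hz0 : f z = 0
    · obtain ⟨c, hzc, hc2⟩ := hf.2.1 z hz0
      by_cases hca : c = a
      · exact hca ▸ hzc
      by_cases hcb : c = b
      · exfalso
        have := sum_two f hab.ne
        rw [hcb] at hc2
        omega
      · exfalso
        have := sum_three f hab.ne (Ne.symm hca) (Ne.symm hcb)
        omega
    · exfalso
      have := sum_three f hab.ne (Ne.symm hza) (Ne.symm hzb)
      have := Nat.pos_of_ne_zero hz0
      omega
  · -- all values positive, so card V = 3; connected graph on 3 vertices
    push_neg at hz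
    have hcard : Fintype.card V = 3 := by
      have := card_le_of_all_pos hz
      omega
    have hiso : NoIsolated G := noIso (by omega) hconn
    have : Nonempty V := Fintype.card_pos_iff.mp (by omega)
    obtain ⟨u⟩ := this
    obtain ⟨v, huv⟩ := hiso u
    have hw : ∃ w, w ∉ ({u, v} : Finset V) := by
      by_contra h
      push_neg at h
      have hsub : (Finset.univ : Finset V) ⊆ {u, v} := fun z _ => h z
      have := Finset.card_le_card hsub
      have h2 : ({u, v} : Finset V).card ≤ 2 := Finset.card_insert_le u {v}
      rw [Finset.card_univ] at this
      omega
    obtain ⟨w, hwmem⟩ := hw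
    have hwu : w ≠ u := by intro h; exact hwmem (by simp [h])
    have hwv : w ≠ v := by intro h; exact hwmem (by simp [h])
    have hcard3 : ({u, v, w} : Finset V).card = 3 := by
      rw [Finset.card_insert_of_notMem (by simp [huv.ne, hwu.symm]),
        Finset.card_pair (Ne.symm hwv)]
    have huniv : ({u, v, w} : Finset V) = Finset.univ :=
      Finset.eq_univ_of_card _ (by omega)
    have hmem : ∀ z : V, z = u ∨ z = v ∨ z = w := by
      intro z
      have := huniv ▸ Finset.mem_univ z
      simpa using this
    obtain ⟨t, hwt⟩ := hiso w
    rcases hmem t with h | h | h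
    · -- w adj u : u dominates
      refine ⟨u, ?_⟩
      intro z hz'
      rcases hmem z with h' | h' | h'
      · exact absurd h' hz'
      · exact h' ▸ huv.symm
      · exact h' ▸ (h ▸ hwt)
    · -- w adj v : v dominates
      refine ⟨v, ?_⟩
      intro z hz'
      rcases hmem z with h' | h' | h'
      · exact h' ▸ huv
      · exact absurd h' hz'
      · exact h' ▸ (h ▸ hwt)
    · exact absurd (h ▸ hwt) (G.irrefl)

private lemma trdnset_nonempty (hiso : NoIsolated G) :
    {w | ∃ f : V → ℕ, TRDF G f ∧ w = ∑ v, f v}.Nonempty := by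
  refine ⟨∑ _v : V, 1, fun _ => 1, ⟨fun v => one_le_two, ?_, ?_⟩, rfl⟩
  · intro v h; exact absurd h one_ne_zero
  · intro v _
    obtain ⟨u, hu⟩ := hiso v
    exact ⟨u, hu, one_pos⟩

private lemma three_le_trdn (hn3 : 3 ≤ Fintype.card V) (hconn : G.Connected) :
    3 ≤ trdn G := by
  have hiso : NoIsolated G := noIso (by omega) hconn
  have hm : ∃ f : V → ℕ, TRDF G f ∧ trdn G = ∑ v, f v :=
    Nat.sInf_mem (trdnset_nonempty hiso)
  obtain ⟨f, hf, hsum⟩ := hm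
  have hgoal : 3 ≤ ∑ v, f v := by
    by_cases hz : ∃ v0, f v0 = 0
    · obtain ⟨v0, hv0⟩ := hz
      obtain ⟨a, _, ha2⟩ := hf.2.1 v0 hv0
      obtain ⟨b, hab, hbpos⟩ := hf.2.2 a (by omega)
      have := sum_two f hab.ne
      omega
    · push_neg at hz
      have := card_le_of_all_pos hz
      omega
  omega

private lemma trdn_le_three (hiso : NoIsolated G) {a : V}
    (hdom : ∀ v, v ≠ a → G.Adj v a) : trdn G ≤ 3 := by
  classical
  obtain ⟨b, hab⟩ := hiso a
  have hne : a ≠ b := hab.ne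
  set f : V → ℕ := fun v => (if v = a then 2 else 0) + (if v = b then 1 else 0) with hfdef
  have hfa : f a = 2 := by simp [hfdef, hne]
  have hfb : f b = 1 := by simp [hfdef, Ne.symm hne]
  have hzero : ∀ v, v ≠ a → v ≠ b → f v = 0 := by
    intro v h1 h2; simp [hfdef, h1, h2]
  have htr : TRDF G f := by
    refine ⟨?_, ?_, ?_⟩
    · intro v
      by_cases h1 : v = a
      · rw [h1, hfa]
      by_cases h2 : v = b
      · rw [h2, hfb]; omega
      · rw [hzero v h1 h2]; omega
    · intro v hv
      have h1 : v ≠ a := by intro h; rw [h, hfa] at hv; omega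
      have h2 : v ≠ b := by intro h; rw [h, hfb] at hv; omega
      exact ⟨a, hdom v h1, hfa⟩
    · intro v hv
      by_cases h1 : v = a
      · exact ⟨b, h1 ▸ hab, by omega⟩
      by_cases h2 : v = b
      · exact ⟨a, h2 ▸ hab.symm, by omega⟩
      · rw [hzero v h1 h2] at hv; omega
  have hsum : ∑ v, f v = 3 := by
    rw [hfdef]
    rw [Finset.sum_add_distrib]
    simp [Finset.sum_ite_eq']
  exact Nat.sInf_le ⟨f, htr, hsum.symm⟩

private lemma trdn_le_four {a b : V} (hab : G.Adj a b)
    (hpair : ∀ v, G.Adj v a ∨ G.Adj v b) : trdn G ≤ 4 := by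
  classical
  have hne : a ≠ b := hab.ne
  set f : V → ℕ := fun v => (if v = a then 2 else 0) + (if v = b then 2 else 0) with hfdef
  have hfa : f a = 2 := by simp [hfdef, hne]
  have hfb : f b = 2 := by simp [hfdef, Ne.symm hne]
  have hzero : ∀ v, v ≠ a → v ≠ b → f v = 0 := by
    intro v h1 h2; simp [hfdef, h1, h2]
  have htr : TRDF G f := by
    refine ⟨?_, ?_, ?_⟩
    · intro v
      by_cases h1 : v = a
      · rw [h1, hfa]
      by_cases h2 : v = b
      · rw [h2, hfb]
      · rw [hzero v h1 h2]; omega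
    · intro v hv
      rcases hpair v with h | h
      · exact ⟨a, h, hfa⟩
      · exact ⟨b, h, hfb⟩
    · intro v hv
      by_cases h1 : v = a
      · exact ⟨b, h1 ▸ hab, by omega⟩
      by_cases h2 : v = b
      · exact ⟨a, h2 ▸ hab.symm, by omega⟩
      · rw [hzero v h1 h2] at hv; omega
  have hsum : ∑ v, f v = 4 := by
    rw [hfdef]
    rw [Finset.sum_add_distrib]
    simp [Finset.sum_ite_eq']
  exact Nat.sInf_le ⟨f, htr, hsum.symm⟩

private lemma tdomnset_nonempty (hiso : NoIsolated G) :
    {k | ∃ S : Finset V, (∀ v, ∃ u ∈ S, G.Adj v u) ∧ S.card = k}.Nonempty := by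
  refine ⟨Fintype.card V, Finset.univ, ?_, Finset.card_univ⟩
  intro v
  obtain ⟨u, hu⟩ := hiso v
  exact ⟨u, Finset.mem_univ u, hu⟩

private lemma two_le_tdomn (hn : 1 ≤ Fintype.card V) (hiso : NoIsolated G) :
    2 ≤ tdomn G := by
  classical
  have hm : ∃ S : Finset V, (∀ v, ∃ u ∈ S, G.Adj v u) ∧ S.card = tdomn G :=
    Nat.sInf_mem (tdomnset_nonempty hiso)
  obtain ⟨S, hS, hcard⟩ := hm
  have : Nonempty V := Fintype.card_pos_iff.mp (by omega)
  obtain ⟨v⟩ := this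
  obtain ⟨u, huS, _⟩ := hS v
  obtain ⟨t, htS, hut⟩ := hS u
  have htu : t ≠ u := hut.ne'
  have hsub : ({t, u} : Finset V) ⊆ S :=
    Finset.insert_subset htS (Finset.singleton_subset_iff.mpr huS)
  have := Finset.card_le_card hsub
  rw [Finset.card_pair htu] at this
  rw [← hcard]
  exact this

private lemma tdomn_le_two {a b : V} (hab : G.Adj a b)
    (hpair : ∀ v, G.Adj v a ∨ G.Adj v b) : tdomn G ≤ 2 := by
  classical
  refine Nat.sInf_le ⟨{a, b}, ?_, Finset.card_pair hab.ne⟩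
  intro v
  rcases hpair v with h | h
  · exact ⟨a, by simp, h⟩
  · exact ⟨b, by simp, h⟩

private lemma domnset_nonempty :
    {k | ∃ S : Finset V, (∀ v, v ∉ S → ∃ u ∈ S, G.Adj v u) ∧ S.card = k}.Nonempty :=
  ⟨Fintype.card V, Finset.univ, fun v hv => absurd (Finset.mem_univ v) hv, Finset.card_univ⟩

private lemma domn_ne_zero (hn : 1 ≤ Fintype.card V) : domn G ≠ 0 := by
  classical
  intro h0
  have hm : ∃ S : Finset V, (∀ v, v ∉ S → ∃ u ∈ S, G.Adj v u) ∧ S.card = domn G :=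
    Nat.sInf_mem (domnset_nonempty (G := G))
  obtain ⟨S, hS, hcard⟩ := hm
  rw [h0] at hcard
  rw [Finset.card_eq_zero] at hcard
  subst hcard
  have : Nonempty V := Fintype.card_pos_iff.mp (by omega)
  obtain ⟨v⟩ := this
  obtain ⟨u, hu, _⟩ := hS v (Finset.notMem_empty v)
  exact Finset.notMem_empty u hu

private lemma domn_le_one {a : V} (hdom : ∀ v, v ≠ a → G.Adj v a) : domn G ≤ 1 := by
  classical
  refine Nat.sInf_le ⟨{a}, ?_, Finset.card_singleton a⟩
  intro v hv
  exact ⟨a, Finset.mem_singleton_self a, hdom v (by simpa using hv)⟩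

private lemma domn_le_two {a b : V} (hab : G.Adj a b)
    (hpair : ∀ v, G.Adj v a ∨ G.Adj v b) : domn G ≤ 2 := by
  classical
  refine Nat.sInf_le ⟨{a, b}, ?_, Finset.card_pair hab.ne⟩
  intro v _
  rcases hpair v with h | h
  · exact ⟨a, by simp, h⟩
  · exact ⟨b, by simp, h⟩

end Helpers

theorem stmt10 {V : Type*} [Fintype V] (G : SimpleGraph V)
    (hn : 3 ≤ Fintype.card V) (hconn : G.Connected) :
    ((trdn G = 3 ∨ trdn G = 4) ↔ tdomn G = 2) ∧
    (trdn G = 3 → domn G = 1) ∧ (trdn G = 4 → domn G = 2) := by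
  classical
  have hiso : NoIsolated G := noIso (by omega) hconn
  have h3le : 3 ≤ trdn G := three_le_trdn hn hconn
  have htrdf_of : ∀ w : ℕ, trdn G = w →
      ∃ f : V → ℕ, TRDF G f ∧ ∑ v, f v = w := by
    intro w hw
    have hm : ∃ f : V → ℕ, TRDF G f ∧ trdn G = ∑ v, f v :=
      Nat.sInf_mem (trdnset_nonempty hiso)
    obtain ⟨f, hf, hsum⟩ := hm
    exact ⟨f, hf, by omega⟩
  have hdomvert_to_trdn : (∃ a, ∀ v, v ≠ a → G.Adj v a) → trdn G ≤ 3 := by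
    rintro ⟨a, ha⟩
    exact trdn_le_three hiso ha
  refine ⟨⟨?_, ?_⟩, ?_, ?_⟩
  · -- trdn ∈ {3,4} → tdomn = 2
    intro h
    have hle4 : ∃ f : V → ℕ, TRDF G f ∧ ∑ v, f v ≤ 4 := by
      rcases h with h | h
      · obtain ⟨f, hf, hsum⟩ := htrdf_of 3 h
        exact ⟨f, hf, by omega⟩
      · obtain ⟨f, hf, hsum⟩ := htrdf_of 4 h
        exact ⟨f, hf, by omega⟩
    obtain ⟨f, hf, hsum⟩ := hle4
    obtain ⟨a, b, hab, hpair⟩ := trdf_pair hn hconn hf hsum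
    have h1 := tdomn_le_two hab hpair
    have h2 := two_le_tdomn (by omega) hiso
    omega
  · -- tdomn = 2 → trdn ∈ {3,4}
    intro h2
    have hm : ∃ S : Finset V, (∀ v, ∃ u ∈ S, G.Adj v u) ∧ S.card = tdomn G :=
      Nat.sInf_mem (tdomnset_nonempty hiso)
    obtain ⟨S, hS, hcard⟩ := hm
    rw [h2] at hcard
    obtain ⟨a, b, hne, rfl⟩ := Finset.card_eq_two.mp hcard
    have hab : G.Adj a b := by
      obtain ⟨u, huS, hau⟩ := hS a
      rcases Finset.mem_insert.mp huS with rfl | h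
      · exact absurd hau (G.irrefl)
      · rw [Finset.mem_singleton] at h
        exact h ▸ hau
    have hpair : ∀ v, G.Adj v a ∨ G.Adj v b := by
      intro v
      obtain ⟨u, huS, hvu⟩ := hS v
      rcases Finset.mem_insert.mp huS with rfl | h
      · exact Or.inl hvu
      · rw [Finset.mem_singleton] at h
        exact Or.inr (h ▸ hvu)
    have := trdn_le_four hab hpair
    omega
  · -- trdn = 3 → domn = 1
    intro h3
    obtain ⟨f, hf, hsum⟩ := htrdf_of 3 h3
    obtain ⟨a, ha⟩ := trdf_domvert hn hconn hf hsum
    have h1 := domn_le_one ha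
    have h0 := domn_ne_zero (G := G) (by omega)
    omega
  · -- trdn = 4 → domn = 2
    intro h4
    obtain ⟨f, hf, hsum⟩ := htrdf_of 4 h4
    obtain ⟨a, b, hab, hpair⟩ := trdf_pair hn hconn hf (le_of_eq hsum)
    have hle2 := domn_le_two hab hpair
    have h0 := domn_ne_zero (G := G) (by omega)
    have h1 : domn G ≠ 1 := by
      intro h1
      have hm : ∃ S : Finset V, (∀ v, v ∉ S → ∃ u ∈ S, G.Adj v u) ∧ S.card = domn G :=
        Nat.sInf_mem (domnset_nonempty (G := G))
      obtain ⟨S, hS, hcard⟩ := hm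
      rw [h1] at hcard
      obtain ⟨c, rfl⟩ := Finset.card_eq_one.mp hcard
      have hdom : ∀ v, v ≠ c → G.Adj v c := by
        intro v hv
        obtain ⟨u, huS, hvu⟩ := hS v (by simpa using hv)
        rw [Finset.mem_singleton] at huS
        exact huS ▸ hvu
      have := hdomvert_to_trdn ⟨c, hdom⟩
      omega
    omega
end
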